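/- arXiv:1006.0965 — 6 statements merged into one kernel-verified Lean document; each statement's English description precedes it below -/
import Mathlib

section
/- Under conditions (C1)–(C5), the quasistationary distributions are monotone under scaling: for every A > A_0, every y ≥ 1 and every x ∈ [0, A], one has Q_{yA}(yx) ≥ Q_A(x), where Q_B denotes the CDF of the quasistationary distribution at level B. -/
/-
Run both conditioned chains from `δ₀` and write `Fₙ`, `Gₙ` for the CDFs of the `n`-step laws at
levels `A` and `yA`. By induction, `Fₙ(z) ≤ Gₙ(yz)` for all `z`: the law at level `A`, scaled by
`y`, stochastically dominates the one at level `yA`. In the induction step, (C5) compares the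
kernels started at `t` and at `yt`, and by (C4) the kernel at level `yA` is stochastically
increasing in its starting point, so integrating its CDF against the dominating law gives the
smaller value. Letting `n → ∞` with (C1) gives the claim.
-/

open MeasureTheory Set Filter Topology ProbabilityTheory
open scoped ENNReal

namespace MeasureTheory.Measure

variable {μ ν : Measure ℝ}

theorem measure_Iio_le_of_forall_measure_Iic_le (h : ∀ z, μ (Iic z) ≤ ν (Iic z)) (c : ℝ) :
    μ (Iio c) ≤ ν (Iio c) := by
  obtain ⟨u, hu_mono, hu_lt, hu_lim⟩ := exists_seq_strictMono_tendsto c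
  rw [← iUnion_Iic_eq_Iio_of_lt_of_tendsto hu_lt hu_lim,
    Monotone.measure_iUnion fun _ _ hmn => Iic_subset_Iic.2 (hu_mono.monotone hmn)]
  exact iSup_le fun n => (h (u n)).trans (measure_mono (subset_iUnion (fun i => Iic (u i)) n))

theorem measure_le_of_isLowerSet (h : ∀ z, μ (Iic z) ≤ ν (Iic z)) (huniv : μ univ ≤ ν univ)
    {S : Set ℝ} (hS : IsLowerSet S) : μ S ≤ ν S := by
  rcases S.eq_empty_or_nonempty with rfl | hne
  · simp
  by_cases hbdd : BddAbove S
  swap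
  · have : S = univ := eq_univ_of_forall fun s => by
      obtain ⟨w, hwS, hsw⟩ := not_bddAbove_iff.1 hbdd s
      exact hS hsw.le hwS
    rwa [this]
  have hS_Iic : S ⊆ Iic (sSup S) := fun s hs => le_csSup hbdd hs
  by_cases hmem : sSup S ∈ S
  · rw [hS_Iic.antisymm (hS.Iic_subset hmem)]
    exact h _
  · have : S = Iio (sSup S) := by
      refine subset_antisymm (fun s hs => mem_Iio.2 ((hS_Iic hs).lt_of_ne ?_)) fun s hs => ?_
      · rintro rfl
        exact hmem hs
      · obtain ⟨w, hwS, hsw⟩ := exists_lt_of_lt_csSup hne hs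
        exact hS hsw.le hwS
    rw [this]
    exact measure_Iio_le_of_forall_measure_Iic_le h _

theorem lintegral_ofReal_le_of_antitone (h : ∀ z, μ (Iic z) ≤ ν (Iic z))
    (huniv : μ univ ≤ ν univ) {f : ℝ → ℝ} (hf : Antitone f) (hf₀ : 0 ≤ f) :
    ∫⁻ t, ENNReal.ofReal (f t) ∂μ ≤ ∫⁻ t, ENNReal.ofReal (f t) ∂ν := by
  rw [lintegral_eq_lintegral_meas_lt μ (.of_forall hf₀) hf.measurable.aemeasurable,
    lintegral_eq_lintegral_meas_lt ν (.of_forall hf₀) hf.measurable.aemeasurable]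
  exact lintegral_mono fun s => measure_le_of_isLowerSet h huniv
    fun a b hba ha => ha.trans_le (hf hba)

theorem lintegral_le_of_antitoneOn (h : ∀ z, μ (Iic z) ≤ ν (Iic z)) (huniv : μ univ ≤ ν univ)
    {a b : ℝ} (hab : a ≤ b) (hμ : ∀ᵐ t ∂μ, t ∈ Icc a b) (hν : ∀ᵐ t ∂ν, t ∈ Icc a b)
    {f : ℝ → ℝ≥0∞} (hf : AntitoneOn f (Icc a b)) (hf_fin : ∀ t ∈ Icc a b, f t ≠ ∞) :
    ∫⁻ t, f t ∂μ ≤ ∫⁻ t, f t ∂ν := by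
  set g : ℝ → ℝ := fun t => (f (projIcc a b hab t)).toReal
  have hg : Antitone g := fun s t hst =>
    ENNReal.toReal_mono (hf_fin _ (projIcc a b hab s).2)
      (hf (projIcc a b hab s).2 (projIcc a b hab t).2 (monotone_projIcc hab hst))
  have hfg : ∀ t ∈ Icc a b, f t = ENNReal.ofReal (g t) := fun t ht => by
    simp only [g, projIcc_of_mem hab ht, ENNReal.ofReal_toReal (hf_fin t ht)]
  calc ∫⁻ t, f t ∂μ = ∫⁻ t, ENNReal.ofReal (g t) ∂μ := lintegral_congr_ae (hμ.mono hfg)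
    _ ≤ ∫⁻ t, ENNReal.ofReal (g t) ∂ν :=
      lintegral_ofReal_le_of_antitone h huniv hg fun _ => ENNReal.toReal_nonneg
    _ = ∫⁻ t, f t ∂ν := (lintegral_congr_ae (hν.mono hfg)).symm

end MeasureTheory.Measure

theorem isProbabilityMeasure_bind_and_ae_mem {α : Type*} [MeasurableSpace α]
    {κ : α → Measure α} (hκ : Measurable κ) {S : Set α} (hS : MeasurableSet S)
    (hκS : ∀ t ∈ S, IsProbabilityMeasure (κ t) ∧ ∀ᵐ u ∂κ t, u ∈ S)
    {μ : Measure α} [IsProbabilityMeasure μ] (hμ : ∀ᵐ t ∂μ, t ∈ S) :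
    IsProbabilityMeasure (μ.bind κ) ∧ ∀ᵐ u ∂μ.bind κ, u ∈ S := by
  refine ⟨⟨?_⟩, ?_⟩
  · rw [Measure.bind_apply MeasurableSet.univ hκ.aemeasurable]
    simpa using lintegral_congr_ae (μ := μ) (g := fun _ => 1)
      (hμ.mono fun t ht => (hκS t ht).1.measure_univ)
  · change μ.bind κ Sᶜ = 0
    rw [Measure.bind_apply hS.compl hκ.aemeasurable]
    simpa using lintegral_congr_ae (μ := μ) (g := fun _ => 0)
      (hμ.mono fun t ht => mem_ae_iff.1 (hκS t ht).2)

section ScaledComparison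

variable {κ₁ κ₂ : ℝ → Measure ℝ} {A c : ℝ}

theorem bind_Iic_le_bind_Iic_mul (hκ₁ : Measurable κ₁) (hκ₂ : Measurable κ₂)
    (hA : 0 ≤ A) (hc : 0 < c)
    (hκ₂_fin : ∀ s ∈ Icc 0 (c * A), IsFiniteMeasure (κ₂ s))
    (hscale : ∀ t ∈ Icc 0 A, ∀ z, κ₁ t (Iic z) ≤ κ₂ (c * t) (Iic (c * z)))
    (hanti : ∀ w, AntitoneOn (fun s => κ₂ s (Iic w)) (Icc 0 (c * A)))
    {μ ν : Measure ℝ} (hμ : ∀ᵐ t ∂μ, t ∈ Icc 0 A) (hν : ∀ᵐ s ∂ν, s ∈ Icc 0 (c * A))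
    (huniv : μ univ ≤ ν univ) (hμν : ∀ z, μ (Iic z) ≤ ν (Iic (c * z))) (z : ℝ) :
    μ.bind κ₁ (Iic z) ≤ ν.bind κ₂ (Iic (c * z)) := by
  have hmul : Measurable (c * ·) := measurable_const_mul c
  have hμν' : ∀ w, μ.map (c * ·) (Iic w) ≤ ν (Iic w) := fun w => by
    rw [Measure.map_apply hmul measurableSet_Iic, preimage_const_mul_Iic₀ w hc]
    simpa [mul_div_cancel₀ w hc.ne'] using hμν (w / c)
  have hμ' : ∀ᵐ s ∂μ.map (c * ·), s ∈ Icc 0 (c * A) :=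
    (ae_map_iff hmul.aemeasurable measurableSet_Icc).2 <| hμ.mono fun t ht =>
      ⟨mul_nonneg hc.le ht.1, mul_le_mul_of_nonneg_left ht.2 hc.le⟩
  have huniv' : μ.map (c * ·) univ ≤ ν univ := by
    rwa [Measure.map_apply hmul MeasurableSet.univ, preimage_univ]
  have hκ₂_meas : Measurable fun s => κ₂ s (Iic (c * z)) :=
    (Measure.measurable_coe measurableSet_Iic).comp hκ₂
  calc μ.bind κ₁ (Iic z) = ∫⁻ t, κ₁ t (Iic z) ∂μ :=
        Measure.bind_apply measurableSet_Iic hκ₁.aemeasurable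
    _ ≤ ∫⁻ t, κ₂ (c * t) (Iic (c * z)) ∂μ := lintegral_mono_ae (hμ.mono fun t ht => hscale t ht z)
    _ = ∫⁻ s, κ₂ s (Iic (c * z)) ∂μ.map (c * ·) := (lintegral_map hκ₂_meas hmul).symm
    _ ≤ ∫⁻ s, κ₂ s (Iic (c * z)) ∂ν :=
        Measure.lintegral_le_of_antitoneOn hμν' huniv' (by positivity) hμ' hν (hanti _)
          fun s hs => have := hκ₂_fin s hs; measure_ne_top _ _
    _ = ν.bind κ₂ (Iic (c * z)) := (Measure.bind_apply measurableSet_Iic hκ₂.aemeasurable).symm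

theorem iterate_bind_Iic_le_iterate_bind_Iic_mul (hκ₁ : Measurable κ₁) (hκ₂ : Measurable κ₂)
    (hA : 0 ≤ A) (hc : 0 < c)
    (hκ₁S : ∀ t ∈ Icc 0 A, IsProbabilityMeasure (κ₁ t) ∧ ∀ᵐ u ∂κ₁ t, u ∈ Icc 0 A)
    (hκ₂S : ∀ s ∈ Icc 0 (c * A), IsProbabilityMeasure (κ₂ s) ∧ ∀ᵐ u ∂κ₂ s, u ∈ Icc 0 (c * A))
    (hscale : ∀ t ∈ Icc 0 A, ∀ z, κ₁ t (Iic z) ≤ κ₂ (c * t) (Iic (c * z)))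
    (hanti : ∀ w, AntitoneOn (fun s => κ₂ s (Iic w)) (Icc 0 (c * A)))
    (n : ℕ) {μ ν : Measure ℝ} [IsProbabilityMeasure μ] [IsProbabilityMeasure ν]
    (hμ : ∀ᵐ t ∂μ, t ∈ Icc 0 A) (hν : ∀ᵐ s ∂ν, s ∈ Icc 0 (c * A))
    (hμν : ∀ z, μ (Iic z) ≤ ν (Iic (c * z))) (z : ℝ) :
    ((fun m : Measure ℝ => m.bind κ₁)^[n] μ) (Iic z) ≤
      ((fun m : Measure ℝ => m.bind κ₂)^[n] ν) (Iic (c * z)) := by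
  induction n generalizing μ ν with
  | zero => exact hμν z
  | succ n ih =>
    obtain ⟨_, hμ'⟩ := isProbabilityMeasure_bind_and_ae_mem hκ₁ measurableSet_Icc hκ₁S hμ
    obtain ⟨_, hν'⟩ := isProbabilityMeasure_bind_and_ae_mem hκ₂ measurableSet_Icc hκ₂S hν
    refine ih hμ' hν' fun w => bind_Iic_le_bind_Iic_mul hκ₁ hκ₂ hA hc
      (fun s hs => have := (hκ₂S s hs).1; inferInstance) hscale hanti hμ hν ?_ hμν w
    simp only [measure_univ, le_refl]

end ScaledComparison

theorem cond_Iic_apply_Iic {m : Measure ℝ} [IsFiniteMeasure m] {F : ℝ → ℝ}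
    (hF : ∀ x, (m (Iic x)).toReal = F x) {B : ℝ} (hB : 0 < F B) (z : ℝ) :
    m[|Iic B] (Iic z) = ENNReal.ofReal (F (min z B) / F B) := by
  have hm : ∀ x, m (Iic x) = ENNReal.ofReal (F x) := fun x => by
    rw [← hF, ENNReal.ofReal_toReal (measure_ne_top _ _)]
  rw [cond_apply measurableSet_Iic, Iic_inter_Iic, hm, hm, ENNReal.ofReal_div_of_pos hB,
    ENNReal.div_eq_inv_mul, min_comm]

theorem isProbabilityMeasure_cond_Iic_and_ae_mem_Icc {m : Measure ℝ} [IsFiniteMeasure m]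
    (hm : m (Iio 0) = 0) {B : ℝ} (hB : m (Iic B) ≠ 0) :
    IsProbabilityMeasure m[|Iic B] ∧ ∀ᵐ u ∂m[|Iic B], u ∈ Icc 0 B := by
  refine ⟨cond_isProbabilityMeasure hB, ?_⟩
  have hnonneg : ∀ᵐ u ∂m, 0 ≤ u := ae_iff.2 (by simp only [not_le]; exact hm)
  filter_upwards [cond_absolutelyContinuous.ae_le hnonneg, ae_cond_mem measurableSet_Iic]
    with u hu₀ huB using ⟨hu₀, huB⟩

theorem quasistationary_cdf_monotone_under_scaling_general
    (ρ : ℝ → ℝ → ℝ)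
    (K : ℝ → Measure ℝ)
    (hKprob : ∀ t : ℝ, IsProbabilityMeasure (K t))
    (hKsupp : ∀ t : ℝ, K t (Set.Iio (0 : ℝ)) = 0)
    (hρK : ∀ t x : ℝ, 0 ≤ t → (K t (Set.Iic x)).toReal = ρ t x)
    (A₀ : ℝ) (hA₀ : 0 ≤ A₀)
    (hρpos : ∀ A : ℝ, A₀ < A → ∀ t ∈ Set.Icc (0 : ℝ) A, 0 < ρ t A)
    -- the conditioned kernel `κ A`
    (κ : ℝ → ℝ → Measure ℝ)
    (hκmeas : ∀ A : ℝ, Measurable (κ A))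
    (hκ : ∀ A : ℝ, A₀ < A → ∀ t ∈ Set.Icc (0 : ℝ) A,
      κ A t = (K t (Set.Iic A))⁻¹ • (K t).restrict (Set.Iic A))
    -- the quasistationary distribution `Q A`
    (Q : ℝ → Measure ℝ)
    -- (C1): quasistationarity
    (hC1 : ∀ A : ℝ, A₀ < A → ∀ μ : Measure ℝ, IsProbabilityMeasure μ →
      μ (Set.Icc (0 : ℝ) A)ᶜ = 0 → ∀ x : ℝ,
      Tendsto (fun n : ℕ => ((fun m : Measure ℝ => m.bind (κ A))^[n] μ) (Set.Iic x))
        atTop (𝓝 (Q A (Set.Iic x))))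
    -- (C4)
    (hC4 : ∀ B : ℝ, 0 < B → ∀ x : ℝ, x ≤ B → ∀ s s' : ℝ, 0 ≤ s → s ≤ s' →
      0 < ρ s B → 0 < ρ s' B → ρ s' x / ρ s' B ≤ ρ s x / ρ s B)
    -- (C5)
    (hC5 : ∀ s : ℝ, 0 ≤ s → ∀ B : ℝ, 0 < B → ∀ x : ℝ, x ≤ B →
      ∀ t t' : ℝ, 0 < t → t ≤ t' →
      0 < ρ (t * s) (t * B) → 0 < ρ (t' * s) (t' * B) →
      ρ (t * s) (t * x) / ρ (t * s) (t * B) ≤ ρ (t' * s) (t' * x) / ρ (t' * s) (t' * B))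
    (A : ℝ) (hA : A₀ < A) (y : ℝ) (hy : 1 ≤ y)
    (x : ℝ) :
    Q A (Set.Iic x) ≤ Q (y * A) (Set.Iic (y * x)) := by
  have hApos : 0 < A := hA₀.trans_lt hA
  have hy₀ : 0 < y := one_pos.trans_le hy
  have hyA : A₀ < y * A := hA.trans_le (le_mul_of_one_le_left hApos.le hy)
  have hyApos : 0 < y * A := hA₀.trans_lt hyA
  have hcdf : ∀ B, A₀ < B → ∀ t ∈ Icc 0 B, ∀ z,
      κ B t (Iic z) = ENNReal.ofReal (ρ t (min z B) / ρ t B) := fun B hB t ht z => by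
    rw [hκ B hB t ht]
    exact cond_Iic_apply_Iic (hρK t · ht.1) (hρpos B hB t ht) z
  have hκS : ∀ B, A₀ < B → ∀ t ∈ Icc 0 B,
      IsProbabilityMeasure (κ B t) ∧ ∀ᵐ u ∂κ B t, u ∈ Icc 0 B := fun B hB t ht => by
    rw [hκ B hB t ht]
    refine isProbabilityMeasure_cond_Iic_and_ae_mem_Icc (hKsupp t) fun h => ?_
    simpa [← hρK t B ht.1, h] using hρpos B hB t ht
  have hscale : ∀ t ∈ Icc 0 A, ∀ z, κ A t (Iic z) ≤ κ (y * A) (y * t) (Iic (y * z)) := by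
    intro t ht z
    have hyt : y * t ∈ Icc 0 (y * A) :=
      ⟨mul_nonneg hy₀.le ht.1, mul_le_mul_of_nonneg_left ht.2 hy₀.le⟩
    rw [hcdf A hA t ht, hcdf _ hyA _ hyt, ← mul_min_of_nonneg _ _ hy₀.le]
    refine ENNReal.ofReal_le_ofReal ?_
    simpa using hC5 t ht.1 A hApos _ (min_le_right z A) 1 y one_pos hy
      (by simpa using hρpos A hA t ht) (hρpos _ hyA _ hyt)
  have hanti : ∀ w, AntitoneOn (fun s => κ (y * A) s (Iic w)) (Icc 0 (y * A)) :=
    fun w s hs s' hs' hss' => by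
      simp only [hcdf _ hyA _ hs, hcdf _ hyA _ hs']
      exact ENNReal.ofReal_le_ofReal (hC4 _ hyApos _ (min_le_right _ _) s s' hs.1
        hss' (hρpos _ hyA s hs) (hρpos _ hyA s' hs'))
  have hδ : ∀ B, 0 ≤ B → Measure.dirac (0 : ℝ) (Icc 0 B)ᶜ = 0 := fun B hB => by
    simp [Measure.dirac_apply' _ measurableSet_Icc.compl, hB]
  have hδ_scale : ∀ z, Measure.dirac (0 : ℝ) (Iic z) ≤ Measure.dirac (0 : ℝ) (Iic (y * z)) :=
    fun z => by
      by_cases hz : 0 ≤ z <;>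
        simp [Measure.dirac_apply' _ measurableSet_Iic, hz, mul_nonneg hy₀.le]
  exact le_of_tendsto_of_tendsto' (hC1 A hA _ inferInstance (hδ A hApos.le) x)
    (hC1 _ hyA _ inferInstance (hδ _ hyApos.le) (y * x)) fun n =>
    iterate_bind_Iic_le_iterate_bind_Iic_mul (hκmeas A) (hκmeas _) hApos.le hy₀
      (hκS A hA) (hκS _ hyA) hscale hanti n (hδ A hApos.le) (hδ _ hyApos.le)
      hδ_scale x

/-- **Monotonicity of quasistationary distributions under scaling.**
Let `ρ(t,x) = K t (Iic x)` be a stationary Markov transition function on `[0,∞)`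
(`K t` is a probability measure on `[0,∞)` for each `t`, measurably in `t`).  For
`A > A₀` the conditioned kernel `κ A` on `[0,A]` is the normalized restriction of `K`
to `(-∞,A]`, whose transition CDF from state `t` is `x ↦ ρ(t,x)/ρ(t,A)`.
(C1): the quasistationary distribution `Q A` exists for all `A > A₀` — the CDFs of the
`n`-step distributions of the chain with kernel `κ A` converge pointwise to the CDF of
`Q A` for every initial distribution on `[0,A]` — and satisfies `Q A {0} = 0`.
(C2): `ρ(s,x)` is nonincreasing in `s` for fixed `x`.
(C3): `ρ(ts,tx)` is nondecreasing in `t > 0` for fixed `s,x`.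
(C4): `ρ(s,x)/ρ(s,B)` is nonincreasing in `s` for fixed `x ≤ B`.
(C5): `ρ(ts,tx)/ρ(ts,tB)` is nondecreasing in `t > 0` for fixed `s` and `x ≤ B`.
Then for every `A > A₀`, `y ≥ 1` and `x ∈ [0,A]`, one has `Q_{yA}(yx) ≥ Q_A(x)`. -/
theorem quasistationary_cdf_monotone_under_scaling
    (ρ : ℝ → ℝ → ℝ)
    (K : ℝ → Measure ℝ)
    (hKmeas : Measurable K)
    (hKprob : ∀ t : ℝ, IsProbabilityMeasure (K t))
    (hKsupp : ∀ t : ℝ, K t (Set.Iio (0 : ℝ)) = 0)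
    (hρK : ∀ t x : ℝ, 0 ≤ t → (K t (Set.Iic x)).toReal = ρ t x)
    (A₀ : ℝ) (hA₀ : 0 ≤ A₀)
    (hρpos : ∀ A : ℝ, A₀ < A → ∀ t ∈ Set.Icc (0 : ℝ) A, 0 < ρ t A)
    -- the conditioned kernel `κ A`
    (κ : ℝ → ℝ → Measure ℝ)
    (hκmeas : ∀ A : ℝ, Measurable (κ A))
    (hκ : ∀ A : ℝ, A₀ < A → ∀ t ∈ Set.Icc (0 : ℝ) A,
      κ A t = (K t (Set.Iic A))⁻¹ • (K t).restrict (Set.Iic A))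
    -- the quasistationary distribution `Q A`
    (Q : ℝ → Measure ℝ)
    (hQprob : ∀ A : ℝ, A₀ < A → IsProbabilityMeasure (Q A))
    (hQsupp : ∀ A : ℝ, A₀ < A → Q A (Set.Icc (0 : ℝ) A)ᶜ = 0)
    -- (C1): quasistationarity
    (hC1 : ∀ A : ℝ, A₀ < A → ∀ μ : Measure ℝ, IsProbabilityMeasure μ →
      μ (Set.Icc (0 : ℝ) A)ᶜ = 0 → ∀ x : ℝ,
      Tendsto (fun n : ℕ => ((fun m : Measure ℝ => m.bind (κ A))^[n] μ) (Set.Iic x))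
        atTop (𝓝 (Q A (Set.Iic x))))
    (hC1zero : ∀ A : ℝ, A₀ < A → Q A {(0 : ℝ)} = 0)
    -- (C2)
    (hC2 : ∀ x : ℝ, ∀ s s' : ℝ, 0 ≤ s → s ≤ s' → ρ s' x ≤ ρ s x)
    -- (C3)
    (hC3 : ∀ s x : ℝ, 0 ≤ s → 0 ≤ x → ∀ t t' : ℝ, 0 < t → t ≤ t' →
      ρ (t * s) (t * x) ≤ ρ (t' * s) (t' * x))
    -- (C4)
    (hC4 : ∀ B : ℝ, 0 < B → ∀ x : ℝ, x ≤ B → ∀ s s' : ℝ, 0 ≤ s → s ≤ s' →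
      0 < ρ s B → 0 < ρ s' B → ρ s' x / ρ s' B ≤ ρ s x / ρ s B)
    -- (C5)
    (hC5 : ∀ s : ℝ, 0 ≤ s → ∀ B : ℝ, 0 < B → ∀ x : ℝ, x ≤ B →
      ∀ t t' : ℝ, 0 < t → t ≤ t' →
      0 < ρ (t * s) (t * B) → 0 < ρ (t' * s) (t' * B) →
      ρ (t * s) (t * x) / ρ (t * s) (t * B) ≤ ρ (t' * s) (t' * x) / ρ (t' * s) (t' * B))
    (A : ℝ) (hA : A₀ < A) (y : ℝ) (hy : 1 ≤ y)
    (x : ℝ) (hx : x ∈ Set.Icc (0 : ℝ) A) :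
    Q A (Set.Iic x) ≤ Q (y * A) (Set.Iic (y * x)) :=
  quasistationary_cdf_monotone_under_scaling_general ρ K hKprob hKsupp hρK A₀ hA₀ hρpos κ hκmeas hκ
    Q hC1 hC4 hC5 A hA y hy x
end

section
/- Under conditions (C1)–(C5), the expected first exit time started from the quasistationary distribution is nondecreasing in the level: for every A > A_0 and every y ≥ 1, E[T_A^{Q_A}] ≤ E[T_{yA}^{Q_{yA}}], where T_B^{Q_B} = min{ n ≥ 1 : M_n > B } for the Markov chain (M_n) with transition function ρ and initial law M_0 ∼ Q_B. -/
/-! Started from its quasistationary law `Q_B`, the chain killed on leaving `[0, B]` is, after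
`n` steps, distributed as `β_B ^ n • Q_B` with `β_B = ∫ ρ(s, B) dQ_B(s)`, so that
`E[T_B] = ∑ β_B ^ n = (1 - β_B)⁻¹` and it suffices to prove `β_A ≤ β_{yA}`.
By (C5) the conditioned kernel on `[0, A]` is dominated by the one on `[0, yA]` rescaled by
`1 / y`, and by (C4) the latter is stochastically monotone; so for the two conditioned chains
started at `0`, by induction and then in the limit (C1), `Q_A([0, x]) ≤ Q_{yA}([0, yx])`.
Since `ρ(·, A)` is nonincreasing (C2), this gives `β_A ≤ ∫ ρ(s / y, A) dQ_{yA}(s)`, which is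
at most `β_{yA}` by (C3). -/

open MeasureTheory Set Filter Topology
open scoped ENNReal

/-- The first time after time `0` that the process `M` exceeds the level `A`
(`∞` if this never happens), as an extended nonnegative real. -/
noncomputable def hitTime {Ω : Type*} (M : ℕ → Ω → ℝ) (A : ℝ) (ω : Ω) : ℝ≥0∞ :=
  ⨅ n ∈ {n : ℕ | 1 ≤ n ∧ A < M n ω}, (n : ℝ≥0∞)

lemma IsLowerSet.eq_Iic_or_eq_Iio {S : Set ℝ} (hS : IsLowerSet S) (hne : S.Nonempty)
    (hbdd : BddAbove S) : S = Iic (sSup S) ∨ S = Iio (sSup S) := by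
  by_cases hmem : sSup S ∈ S
  · exact .inl <| Subset.antisymm (fun s hs => le_csSup hbdd hs) fun s hs => hS hs hmem
  refine .inr <| Subset.antisymm (fun s hs => (le_csSup hbdd hs).lt_of_ne ?_) fun s hs => ?_
  · rintro rfl; exact hmem hs
  · obtain ⟨s', hs', hss'⟩ := exists_lt_of_lt_csSup hne hs
    exact hS hss'.le hs'

lemma IsLowerSet.eq_univ_of_not_bddAbove {S : Set ℝ} (hS : IsLowerSet S) (hbdd : ¬BddAbove S) :
    S = univ :=
  eq_univ_of_forall fun s => by
    obtain ⟨s', hs', hss'⟩ := not_bddAbove_iff.1 hbdd s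
    exact hS hss'.le hs'

section StochasticOrder

variable {μ ν : Measure ℝ}

lemma measure_Iio_le_of_forall_measure_Iic_le (h : ∀ x, μ (Iic x) ≤ ν (Iic x)) (x : ℝ) :
    μ (Iio x) ≤ ν (Iio x) := by
  obtain ⟨u, hu_mono, hu_lt, hu_lim⟩ := exists_seq_strictMono_tendsto x
  rw [← iUnion_Iic_eq_Iio_of_lt_of_tendsto hu_lt hu_lim, Directed.measure_iUnion
    (Monotone.directed_le fun _ _ hmn => Iic_subset_Iic.2 (hu_mono.monotone hmn))]
  exact iSup_le fun n => (h (u n)).trans (measure_mono (subset_iUnion (fun i => Iic (u i)) n))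

lemma IsLowerSet.measure_le_of_forall_measure_Iic_le (h : ∀ x, μ (Iic x) ≤ ν (Iic x))
    (huniv : μ univ ≤ ν univ) {S : Set ℝ} (hS : IsLowerSet S) : μ S ≤ ν S := by
  rcases S.eq_empty_or_nonempty with rfl | hne
  · simp
  by_cases hbdd : BddAbove S
  · rcases hS.eq_Iic_or_eq_Iio hne hbdd with hS' | hS' <;> rw [hS']
    exacts [h _, measure_Iio_le_of_forall_measure_Iic_le h _]
  · rwa [hS.eq_univ_of_not_bddAbove hbdd]

lemma lintegral_ofReal_le_of_antitone_of_forall_measure_Iic_le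
    (h : ∀ x, μ (Iic x) ≤ ν (Iic x)) (huniv : μ univ ≤ ν univ) {f : ℝ → ℝ} (hf : Antitone f) :
    ∫⁻ s, ENNReal.ofReal (f s) ∂μ ≤ ∫⁻ s, ENNReal.ofReal (f s) ∂ν := by
  -- layer cake for the positive part of `f`: its superlevel sets are lower sets
  set g : ℝ → ℝ := fun s => max (f s) 0
  have hg : Antitone g := fun a b hab => max_le_max (hf hab) le_rfl
  have hfg : ∀ s, ENNReal.ofReal (f s) = ENNReal.ofReal (g s) := fun s => by
    simp [g, ENNReal.ofReal_max]
  simp only [hfg]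
  rw [lintegral_eq_lintegral_meas_lt (f := g) μ (ae_of_all _ fun _ => le_max_right _ _)
      hg.measurable.aemeasurable,
    lintegral_eq_lintegral_meas_lt (f := g) ν (ae_of_all _ fun _ => le_max_right _ _)
      hg.measurable.aemeasurable]
  exact lintegral_mono fun t => IsLowerSet.measure_le_of_forall_measure_Iic_le h huniv
    fun a b hab hb => hb.trans_le (hg hab)

lemma lintegral_ofReal_le_of_antitone_of_forall_measure_Iic_le_mul {y : ℝ} (hy : 0 < y)
    (h : ∀ x, μ (Iic x) ≤ ν (Iic (y * x))) (huniv : μ univ ≤ ν univ) {f : ℝ → ℝ}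
    (hf : Antitone f) :
    ∫⁻ s, ENNReal.ofReal (f s) ∂μ ≤ ∫⁻ s, ENNReal.ofReal (f (s / y)) ∂ν := by
  have hdiv : Measurable fun s : ℝ => s / y := measurable_div_const' y
  have hIic : ∀ x, ν.map (· / y) (Iic x) = ν (Iic (y * x)) := fun x => by
    rw [Measure.map_apply hdiv measurableSet_Iic]
    congr 1; ext s; simp [div_le_iff₀ hy, mul_comm]
  rw [← lintegral_map (f := fun s => ENNReal.ofReal (f s))
    (ENNReal.measurable_ofReal.comp hf.measurable) hdiv]
  refine lintegral_ofReal_le_of_antitone_of_forall_measure_Iic_le (fun x => (hIic x).symm ▸ h x)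
    ?_ hf
  rwa [Measure.map_apply hdiv MeasurableSet.univ, preimage_univ]

end StochasticOrder

section KernelIterates

variable {α : Type*} [MeasurableSpace α] {κ : α → Measure α} {T : Set α}

lemma bind_isProbabilityMeasure_and_compl_eq_zero (hκ : Measurable κ) (hT : MeasurableSet T)
    (hκT : ∀ s ∈ T, IsProbabilityMeasure (κ s) ∧ κ s Tᶜ = 0) {μ : Measure α}
    [IsProbabilityMeasure μ] (hμ : μ Tᶜ = 0) :
    IsProbabilityMeasure (μ.bind κ) ∧ μ.bind κ Tᶜ = 0 := by
  have hae : ∀ᵐ s ∂μ, s ∈ T := mem_ae_iff.2 hμ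
  refine ⟨⟨?_⟩, ?_⟩
  · rw [Measure.bind_apply .univ hκ.aemeasurable,
      lintegral_congr_ae (hae.mono fun s hs => (hκT s hs).1.measure_univ)]
    simp
  · rw [Measure.bind_apply hT.compl hκ.aemeasurable,
      lintegral_congr_ae (hae.mono fun s hs => (hκT s hs).2)]
    simp

lemma iterate_bind_isProbabilityMeasure_and_compl_eq_zero (hκ : Measurable κ)
    (hT : MeasurableSet T) (hκT : ∀ s ∈ T, IsProbabilityMeasure (κ s) ∧ κ s Tᶜ = 0)
    {μ : Measure α} [IsProbabilityMeasure μ] (hμ : μ Tᶜ = 0) (n : ℕ) :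
    IsProbabilityMeasure ((fun m : Measure α => m.bind κ)^[n] μ) ∧
      (fun m : Measure α => m.bind κ)^[n] μ Tᶜ = 0 := by
  induction n with
  | zero => exact ⟨‹_›, hμ⟩
  | succ n ih =>
    rw [Function.iterate_succ_apply']
    have := ih.1
    exact bind_isProbabilityMeasure_and_compl_eq_zero hκ hT hκT ih.2

end KernelIterates

lemma measure_Iic_eq_one_of_compl_Icc_eq_zero {μ : Measure ℝ} [IsProbabilityMeasure μ]
    {a b z : ℝ} (hμ : μ (Icc a b)ᶜ = 0) (hz : b ≤ z) : μ (Iic z) = 1 :=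
  (prob_compl_eq_zero_iff measurableSet_Iic).1 <|
    measure_mono_null (compl_subset_compl.2 fun _ hs => hs.2.trans hz) hμ

lemma dirac_zero_compl_Icc {B : ℝ} (hB : 0 ≤ B) : Measure.dirac (0 : ℝ) (Icc 0 B)ᶜ = 0 := by
  simp [Measure.dirac_apply' _ measurableSet_Icc.compl, hB]

structure IsConditionedKernel (ρ : ℝ → ℝ → ℝ) (B : ℝ) (κ : ℝ → Measure ℝ) : Prop where
  measurable : Measurable κ
  pos : ∀ s ∈ Icc 0 B, 0 < ρ s B
  isProbabilityMeasure : ∀ s ∈ Icc 0 B, IsProbabilityMeasure (κ s)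
  compl_Icc : ∀ s ∈ Icc 0 B, κ s (Icc 0 B)ᶜ = 0
  measure_Iic : ∀ s ∈ Icc 0 B, ∀ x ≤ B, κ s (Iic x) = ENNReal.ofReal (ρ s x / ρ s B)

lemma isConditionedKernel_of_eq_cond {ρ : ℝ → ℝ → ℝ} {K κ : ℝ → Measure ℝ} {B : ℝ}
    [∀ t, IsFiniteMeasure (K t)] (hKsupp : ∀ t, K t (Iio 0) = 0)
    (hρK : ∀ t x, 0 ≤ t → (K t (Iic x)).toReal = ρ t x) (hκmeas : Measurable κ)
    (hpos : ∀ t ∈ Icc 0 B, 0 < ρ t B)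
    (hκ : ∀ t ∈ Icc 0 B, κ t = (K t (Iic B))⁻¹ • (K t).restrict (Iic B)) :
    IsConditionedKernel ρ B κ := by
  have hK : ∀ t, 0 ≤ t → ∀ x, K t (Iic x) = ENNReal.ofReal (ρ t x) := fun t ht x => by
    rw [← hρK t x ht, ENNReal.ofReal_toReal (measure_ne_top _ _)]
  have hcond : ∀ t ∈ Icc 0 B, κ t = ProbabilityTheory.cond (K t) (Iic B) := hκ
  have hne : ∀ t ∈ Icc 0 B, K t (Iic B) ≠ 0 := fun t ht => by
    simpa [hK t ht.1] using hpos t ht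
  refine ⟨hκmeas, hpos, fun t ht => hcond t ht ▸ ProbabilityTheory.cond_isProbabilityMeasure
    (hne t ht), fun t ht => ?_, fun t ht x hx => ?_⟩
  · rw [hcond t ht, ProbabilityTheory.cond_apply measurableSet_Iic]
    refine mul_eq_zero_of_right _ (measure_mono_null (fun s hs => ?_) (hKsupp t))
    simp only [mem_inter_iff, mem_Iic, mem_compl_iff, mem_Icc, not_and_or, not_le] at hs
    exact hs.2.resolve_right hs.1.not_gt
  · rw [hcond t ht, ProbabilityTheory.cond_apply measurableSet_Iic, Iic_inter_Iic,
      min_eq_right hx, hK t ht.1, hK t ht.1, ENNReal.ofReal_div_of_pos (hpos t ht),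
      ENNReal.div_eq_inv_mul]

section Domination

variable {ρ : ℝ → ℝ → ℝ} {κ₁ κ₂ : ℝ → Measure ℝ} {A y : ℝ}

lemma IsConditionedKernel.iterate_bind_isProbabilityMeasure_and_compl_eq_zero {B : ℝ}
    (hκ : IsConditionedKernel ρ B κ₁) {μ : Measure ℝ} [IsProbabilityMeasure μ]
    (hμ : μ (Icc 0 B)ᶜ = 0) (n : ℕ) :
    IsProbabilityMeasure ((fun m : Measure ℝ => m.bind κ₁)^[n] μ) ∧
      (fun m : Measure ℝ => m.bind κ₁)^[n] μ (Icc 0 B)ᶜ = 0 :=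
  _root_.iterate_bind_isProbabilityMeasure_and_compl_eq_zero hκ.measurable measurableSet_Icc
    (fun s hs => ⟨hκ.isProbabilityMeasure s hs, hκ.compl_Icc s hs⟩) hμ n

/-- `hC5` compares the two kernels at corresponding points and `hC4` makes the rescaled second
kernel stochastically monotone, so the domination `hμν` propagates through one step. -/
lemma bind_measure_Iic_le_bind_measure_Iic_mul (hA : 0 < A) (hy : 1 ≤ y)
    (h₁ : IsConditionedKernel ρ A κ₁) (h₂ : IsConditionedKernel ρ (y * A) κ₂)
    (hC4 : ∀ x ≤ y * A, AntitoneOn (fun s => ρ s x / ρ s (y * A)) (Icc 0 (y * A)))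
    (hC5 : ∀ s ∈ Icc 0 A, ∀ x ≤ A, ρ s x / ρ s A ≤ ρ (y * s) (y * x) / ρ (y * s) (y * A))
    {μ ν : Measure ℝ} [IsProbabilityMeasure μ] [IsProbabilityMeasure ν]
    (hμ : μ (Icc 0 A)ᶜ = 0) (hν : ν (Icc 0 (y * A))ᶜ = 0)
    (hμν : ∀ x, μ (Iic x) ≤ ν (Iic (y * x))) {x : ℝ} (hx : x ≤ A) :
    μ.bind κ₁ (Iic x) ≤ ν.bind κ₂ (Iic (y * x)) := by
  have hy0 : 0 < y := one_pos.trans_le hy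
  set c : ℝ → ℝ := fun s => projIcc 0 A hA.le s
  have hyc : ∀ s, y * c s ∈ Icc 0 (y * A) := fun s =>
    ⟨mul_nonneg hy0.le (projIcc 0 A hA.le s).2.1,
      mul_le_mul_of_nonneg_left (projIcc 0 A hA.le s).2.2 hy0.le⟩
  set g : ℝ → ℝ := fun s => ρ (y * c s) (y * x) / ρ (y * c s) (y * A)
  have hg : Antitone g := fun a b hab =>
    hC4 (y * x) (mul_le_mul_of_nonneg_left hx hy0.le) (hyc a) (hyc b)
      (mul_le_mul_of_nonneg_left (monotone_projIcc hA.le hab) hy0.le)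
  have hμ' : ∀ᵐ s ∂μ, s ∈ Icc 0 A := mem_ae_iff.2 hμ
  have hν' : ∀ᵐ s ∂ν, s ∈ Icc 0 (y * A) := mem_ae_iff.2 hν
  have hκ₁g : ∀ᵐ s ∂μ, κ₁ s (Iic x) ≤ ENNReal.ofReal (g s) := hμ'.mono fun s hs => by
    rw [h₁.measure_Iic s hs x hx]
    exact ENNReal.ofReal_le_ofReal (by simpa [g, c, projIcc_of_mem hA.le hs] using hC5 s hs x hx)
  have hgκ₂ : ∀ᵐ s ∂ν, ENNReal.ofReal (g (s / y)) = κ₂ s (Iic (y * x)) := hν'.mono fun s hs => by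
    have hsy : s / y ∈ Icc 0 A :=
      ⟨div_nonneg hs.1 hy0.le, (div_le_iff₀ hy0).2 (by linarith [hs.2])⟩
    rw [h₂.measure_Iic s hs _ (mul_le_mul_of_nonneg_left hx hy0.le)]
    simp [g, c, projIcc_of_mem hA.le hsy, mul_div_cancel₀ s hy0.ne']
  calc μ.bind κ₁ (Iic x) = ∫⁻ s, κ₁ s (Iic x) ∂μ :=
        Measure.bind_apply measurableSet_Iic h₁.measurable.aemeasurable
    _ ≤ ∫⁻ s, ENNReal.ofReal (g s) ∂μ := lintegral_mono_ae hκ₁g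
    _ ≤ ∫⁻ s, ENNReal.ofReal (g (s / y)) ∂ν :=
        lintegral_ofReal_le_of_antitone_of_forall_measure_Iic_le_mul hy0 hμν (by simp) hg
    _ = ∫⁻ s, κ₂ s (Iic (y * x)) ∂ν := lintegral_congr_ae hgκ₂
    _ = ν.bind κ₂ (Iic (y * x)) :=
        (Measure.bind_apply measurableSet_Iic h₂.measurable.aemeasurable).symm

lemma iterate_bind_dirac_measure_Iic_le (hA : 0 < A) (hy : 1 ≤ y)
    (h₁ : IsConditionedKernel ρ A κ₁) (h₂ : IsConditionedKernel ρ (y * A) κ₂)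
    (hC4 : ∀ x ≤ y * A, AntitoneOn (fun s => ρ s x / ρ s (y * A)) (Icc 0 (y * A)))
    (hC5 : ∀ s ∈ Icc 0 A, ∀ x ≤ A, ρ s x / ρ s A ≤ ρ (y * s) (y * x) / ρ (y * s) (y * A))
    (n : ℕ) (x : ℝ) :
    (fun m : Measure ℝ => m.bind κ₁)^[n] (Measure.dirac 0) (Iic x) ≤
      (fun m : Measure ℝ => m.bind κ₂)^[n] (Measure.dirac 0) (Iic (y * x)) := by
  have hy0 : 0 < y := one_pos.trans_le hy
  have hμ₀ := dirac_zero_compl_Icc hA.le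
  have hν₀ := dirac_zero_compl_Icc (mul_pos hy0 hA).le
  induction n generalizing x with
  | zero =>
    simp only [Function.iterate_zero_apply, Measure.dirac_apply' _ measurableSet_Iic]
    by_cases hx : 0 ≤ x
    · simp [hx, mul_nonneg hy0.le hx]
    · simp [hx, mul_nonneg_iff_of_pos_left hy0]
  | succ n ih =>
    rcases le_or_gt x A with hx | hx
    · obtain ⟨hμ, hμA⟩ := h₁.iterate_bind_isProbabilityMeasure_and_compl_eq_zero hμ₀ n
      obtain ⟨hν, hνA⟩ := h₂.iterate_bind_isProbabilityMeasure_and_compl_eq_zero hν₀ n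
      rw [Function.iterate_succ_apply', Function.iterate_succ_apply']
      exact bind_measure_Iic_le_bind_measure_Iic_mul hA hy h₁ h₂ hC4 hC5 hμA hνA ih hx
    · obtain ⟨hμ, -⟩ := h₁.iterate_bind_isProbabilityMeasure_and_compl_eq_zero hμ₀ (n + 1)
      obtain ⟨hν, hνA⟩ := h₂.iterate_bind_isProbabilityMeasure_and_compl_eq_zero hν₀ (n + 1)
      rw [measure_Iic_eq_one_of_compl_Icc_eq_zero hνA (mul_le_mul_of_nonneg_left hx.le hy0.le)]
      exact prob_le_one

lemma integral_le_integral_of_measure_Iic_le_mul {ρ : ℝ → ℝ → ℝ} {A y : ℝ} (hA : 0 < A)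
    (hy : 1 ≤ y) (hρ : ∀ s, 0 ≤ s → ∀ x, ρ s x ∈ Icc 0 1)
    (hρmeas : ∀ x, Measurable fun s => ρ s x)
    (hC2 : AntitoneOn (fun s => ρ s A) (Icc 0 A))
    (hC3 : ∀ s ∈ Icc 0 A, ρ s A ≤ ρ (y * s) (y * A))
    {Q₁ Q₂ : Measure ℝ} [IsProbabilityMeasure Q₁] [IsProbabilityMeasure Q₂]
    (hQ₁ : Q₁ (Icc 0 A)ᶜ = 0) (hQ₂ : Q₂ (Icc 0 (y * A))ᶜ = 0)
    (hQ : ∀ x, Q₁ (Iic x) ≤ Q₂ (Iic (y * x))) :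
    ∫ s, ρ s A ∂Q₁ ≤ ∫ s, ρ s (y * A) ∂Q₂ := by
  have hy0 : 0 < y := one_pos.trans_le hy
  have hQ₁' : ∀ᵐ s ∂Q₁, s ∈ Icc 0 A := mem_ae_iff.2 hQ₁
  have hQ₂' : ∀ᵐ s ∂Q₂, s ∈ Icc 0 (y * A) := mem_ae_iff.2 hQ₂
  set g : ℝ → ℝ := fun s => ρ (projIcc 0 A hA.le s) A
  have hg : Antitone g := fun a b hab =>
    hC2 (projIcc 0 A hA.le a).2 (projIcc 0 A hA.le b).2 (monotone_projIcc hA.le hab)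
  have hfin : ∫⁻ s, ENNReal.ofReal (ρ s (y * A)) ∂Q₂ ≠ ⊤ := by
    refine ne_top_of_le_ne_top (measure_ne_top Q₂ univ) ?_
    rw [← setLIntegral_one, setLIntegral_univ]
    exact lintegral_mono_ae <| hQ₂'.mono fun s hs => ENNReal.ofReal_le_one.2 (hρ s hs.1 _).2
  rw [integral_eq_lintegral_of_nonneg_ae (hQ₁'.mono fun s hs => (hρ s hs.1 A).1)
      (hρmeas A).aestronglyMeasurable,
    integral_eq_lintegral_of_nonneg_ae (hQ₂'.mono fun s hs => (hρ s hs.1 _).1)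
      (hρmeas _).aestronglyMeasurable]
  refine ENNReal.toReal_mono hfin ?_
  calc ∫⁻ s, ENNReal.ofReal (ρ s A) ∂Q₁ = ∫⁻ s, ENNReal.ofReal (g s) ∂Q₁ :=
        lintegral_congr_ae <| hQ₁'.mono fun s hs => by simp [g, projIcc_of_mem hA.le hs]
    _ ≤ ∫⁻ s, ENNReal.ofReal (g (s / y)) ∂Q₂ :=
        lintegral_ofReal_le_of_antitone_of_forall_measure_Iic_le_mul hy0 hQ (by simp) hg
    _ ≤ ∫⁻ s, ENNReal.ofReal (ρ s (y * A)) ∂Q₂ := lintegral_mono_ae <| hQ₂'.mono fun s hs => by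
        have hsy : s / y ∈ Icc 0 A := ⟨div_nonneg hs.1 hy0.le,
          (div_le_iff₀ hy0).2 (by linarith [hs.2])⟩
        refine ENNReal.ofReal_le_ofReal ?_
        simpa [g, projIcc_of_mem hA.le hsy, mul_div_cancel₀ s hy0.ne'] using hC3 _ hsy

lemma ENat.toENNReal_eq_tsum_indicator (a : ℕ∞) :
    (a : ℝ≥0∞) = ∑' n : ℕ, {n : ℕ | (n : ℕ∞) < a}.indicator (fun _ => 1) n := by
  rw [← tsum_subtype (f := fun _ => (1 : ℝ≥0∞)), ENNReal.tsum_one]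
  induction a using ENat.recTopCoe with
  | top => simp
  | coe m => simp

section ExitTime

variable {Ω : Type*} {X : ℕ → Ω → ℝ} {B : ℝ}

def survivalSet (X : ℕ → Ω → ℝ) (B : ℝ) (n : ℕ) : Set Ω :=
  ⋂ i ∈ Finset.Icc 1 n, X i ⁻¹' Iic B

lemma mem_survivalSet {n : ℕ} {ω : Ω} :
    ω ∈ survivalSet X B n ↔ ∀ i, 1 ≤ i → i ≤ n → X i ω ≤ B := by
  simp [survivalSet, and_imp]

lemma survivalSet_zero : survivalSet X B 0 = univ := by
  ext ω; simp only [mem_survivalSet, mem_univ, iff_true]; omega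

lemma survivalSet_succ (n : ℕ) :
    survivalSet X B (n + 1) = survivalSet X B n ∩ X (n + 1) ⁻¹' Iic B := by
  ext ω
  simp only [mem_survivalSet, mem_inter_iff, mem_preimage, mem_Iic]
  refine ⟨fun h => ⟨fun i h1 h2 => h i h1 (by omega), h _ (by omega) le_rfl⟩, ?_⟩
  rintro ⟨h, hn⟩ i h1 h2
  rcases Nat.lt_or_eq_of_le h2 with h2 | rfl
  exacts [h i h1 (by omega), hn]

lemma measurableSet_survivalSet_comap (n : ℕ) :
    MeasurableSet[⨆ i ∈ Finset.range (n + 1), MeasurableSpace.comap (X i) Real.measurableSpace]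
      (survivalSet X B n) :=
  Finset.measurableSet_biInter _ fun i hi =>
    le_iSup₂ (f := fun i (_ : i ∈ Finset.range (n + 1)) =>
      MeasurableSpace.comap (X i) Real.measurableSpace) i
      (Finset.mem_range.2 (by simp at hi; omega)) _ ⟨Iic B, measurableSet_Iic, rfl⟩

lemma hitTime_eq_tsum_indicator (ω : Ω) :
    hitTime X B ω = ∑' n : ℕ, (survivalSet X B n).indicator (fun _ => 1) ω := by
  have hτ : hitTime X B ω = ((⨅ n ∈ {n : ℕ | 1 ≤ n ∧ B < X n ω}, (n : ℕ∞) : ℕ∞) : ℝ≥0∞) := by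
    simp [hitTime]
  rw [hτ, ENat.toENNReal_eq_tsum_indicator]
  refine tsum_congr fun n => ?_
  have h : (n : ℕ∞) < ⨅ i ∈ {i : ℕ | 1 ≤ i ∧ B < X i ω}, (i : ℕ∞) ↔ ω ∈ survivalSet X B n := by
    rw [← ENat.add_one_le_iff (ENat.natCast_ne_top n), mem_survivalSet]
    simp only [le_iInf_iff, mem_ofPred_eq]
    refine ⟨fun h i h1 h2 => ?_, fun h i hi => ?_⟩
    · by_contra! hB
      have := h i ⟨h1, hB⟩
      norm_cast at this
      omega
    · have : n + 1 ≤ i := by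
        by_contra! hi'
        exact (h i hi.1 (by omega)).not_gt hi.2
      exact_mod_cast this
  by_cases hω : ω ∈ survivalSet X B n
  · simpa [indicator_of_mem hω] using h.2 hω
  · simpa [indicator_of_notMem hω] using mt h.1 hω

lemma measurableSet_survivalSet [MeasurableSpace Ω] (hX : ∀ n, Measurable (X n)) (n : ℕ) :
    MeasurableSet (survivalSet X B n) :=
  Finset.measurableSet_biInter _ fun i _ => hX i measurableSet_Iic

lemma lintegral_hitTime_eq_tsum [MeasurableSpace Ω] (hX : ∀ n, Measurable (X n))
    (P : Measure Ω) : ∫⁻ ω, hitTime X B ω ∂P = ∑' n, P (survivalSet X B n) := by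
  simp_rw [hitTime_eq_tsum_indicator]
  rw [lintegral_tsum fun n =>
    (measurable_const.indicator (measurableSet_survivalSet hX n)).aemeasurable]
  simp [lintegral_indicator (measurableSet_survivalSet hX _)]

end ExitTime

section MarkovChain

variable {Ω : Type*} [MeasurableSpace Ω] {P : Measure Ω} {X : ℕ → Ω → ℝ} {ρ : ℝ → ℝ → ℝ}
  {B : ℝ}

def HasTransitionCDF (P : Measure Ω) (X : ℕ → Ω → ℝ) (ρ : ℝ → ℝ → ℝ) : Prop :=
  ∀ n : ℕ, ∀ x : ℝ,
    P[fun ω => (Set.Iic x).indicator (fun _ => (1 : ℝ)) (X (n + 1) ω) |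
      ⨆ i ∈ Finset.range (n + 1), MeasurableSpace.comap (X i) Real.measurableSpace]
    =ᵐ[P] fun ω => ρ (X n ω) x

lemma HasTransitionCDF.measure_preimage_Iic_inter [IsFiniteMeasure P]
    (hM : HasTransitionCDF P X ρ) (hX : ∀ n, Measurable (X n)) (n : ℕ) (x : ℝ) {S : Set Ω}
    (hS : MeasurableSet[⨆ i ∈ Finset.range (n + 1),
      MeasurableSpace.comap (X i) Real.measurableSpace] S) :
    P (X (n + 1) ⁻¹' Iic x ∩ S) = ENNReal.ofReal (∫ ω in S, ρ (X n ω) x ∂P) := by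
  have hm : ⨆ i ∈ Finset.range (n + 1), MeasurableSpace.comap (X i) Real.measurableSpace ≤
      ‹MeasurableSpace Ω› := iSup₂_le fun i _ => (hX i).comap_le
  have hpre : MeasurableSet (X (n + 1) ⁻¹' Iic x) := hX _ measurableSet_Iic
  have hind : (fun ω => (Iic x).indicator (fun _ => (1 : ℝ)) (X (n + 1) ω)) =
      (X (n + 1) ⁻¹' Iic x).indicator 1 := by
    ext ω; by_cases h : X (n + 1) ω ∈ Iic x <;> simp [h]
  rw [← setIntegral_congr_ae (hm S hS) ((hM n x).mono fun ω h _ => h),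
    setIntegral_condExp hm (hind ▸ (integrable_const 1).indicator hpre) hS, hind,
    integral_indicator_one hpre, measureReal_def, Measure.restrict_apply hpre,
    ENNReal.ofReal_toReal (measure_ne_top _ _)]

variable [IsFiniteMeasure P] {Q : Measure ℝ} [IsFiniteMeasure Q] {β : ℝ}

lemma HasTransitionCDF.map_restrict_survivalSet (hM : HasTransitionCDF P X ρ)
    (hX : ∀ n, Measurable (X n)) (hρ : ∀ x, Measurable fun s => ρ s x)
    (hX0 : P.map (X 0) = Q) (hQB : Q (Ioi B) = 0) (hβ : 0 ≤ β)
    (hinv : ∀ x ≤ B, ∫ s, ρ s x ∂Q = (Q (Iic x)).toReal * β) (n : ℕ) :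
    (P.restrict (survivalSet X B n)).map (X n) = ENNReal.ofReal β ^ n • Q := by
  induction n with
  | zero => simpa [survivalSet_zero] using hX0
  | succ n ih =>
    refine Measure.ext_of_Iic _ _ fun x => ?_
    have hQx : Q (Iic (min x B)) = Q (Iic x) := by
      rw [← Iic_inter_Iic, measure_inter_conull (by rwa [compl_Iic])]
    have hS : survivalSet X B (n + 1) ∩ X (n + 1) ⁻¹' Iic x =
        X (n + 1) ⁻¹' Iic (min x B) ∩ survivalSet X B n := by
      rw [survivalSet_succ, ← Iic_inter_Iic, preimage_inter]; ac_rfl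
    rw [Measure.map_apply (hX _) measurableSet_Iic, Measure.restrict_apply' ?_, inter_comm, hS,
      hM.measure_preimage_Iic_inter hX n _ (measurableSet_survivalSet_comap n),
      ← integral_map (hX n).aemeasurable (hρ _).aestronglyMeasurable, ih,
      integral_smul_measure, hinv _ (min_le_right _ _), hQx, Measure.smul_apply, smul_eq_mul,
      ENNReal.toReal_pow, ENNReal.toReal_ofReal hβ, smul_eq_mul,
      ENNReal.ofReal_mul (by positivity), ENNReal.ofReal_mul ENNReal.toReal_nonneg,
      ENNReal.ofReal_pow hβ,
      ENNReal.ofReal_toReal (measure_ne_top _ _), pow_succ]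
    · ring
    · exact measurableSet_survivalSet hX (n + 1)

lemma HasTransitionCDF.lintegral_hitTime [IsProbabilityMeasure Q]
    (hM : HasTransitionCDF P X ρ) (hX : ∀ n, Measurable (X n)) (hρ : ∀ x, Measurable fun s => ρ s x)
    (hX0 : P.map (X 0) = Q) (hQB : Q (Ioi B) = 0) (hβ : 0 ≤ β)
    (hinv : ∀ x ≤ B, ∫ s, ρ s x ∂Q = (Q (Iic x)).toReal * β) :
    ∫⁻ ω, hitTime X B ω ∂P = (1 - ENNReal.ofReal β)⁻¹ := by
  have hsurv : ∀ n, P (survivalSet X B n) = ENNReal.ofReal β ^ n := fun n => by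
    have := congrArg (· univ) (hM.map_restrict_survivalSet hX hρ hX0 hQB hβ hinv n)
    simpa [Measure.map_apply (hX n) .univ] using this
  rw [lintegral_hitTime_eq_tsum hX, tsum_congr hsurv, ENNReal.tsum_geometric]

lemma HasTransitionCDF.lintegral_hitTime_of_invariant [IsProbabilityMeasure Q]
    (hM : HasTransitionCDF P X ρ) (hX : ∀ n, Measurable (X n)) (hρ : ∀ x, Measurable fun s => ρ s x)
    (hρnn : ∀ s, 0 ≤ s → ∀ x, 0 ≤ ρ s x) (hρneg : ∀ s, 0 ≤ s → ∀ x < 0, ρ s x = 0)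
    (hX0 : P.map (X 0) = Q) (hQ : Q (Icc 0 B)ᶜ = 0)
    (hinv : ∀ x ∈ Icc 0 B, (Q (Iic x)).toReal * ∫ s, ρ s B ∂Q = ∫ s, ρ s x ∂Q) :
    ∫⁻ ω, hitTime X B ω ∂P = (1 - ENNReal.ofReal (∫ s, ρ s B ∂Q))⁻¹ := by
  have hQ' : ∀ᵐ s ∂Q, s ∈ Icc 0 B := mem_ae_iff.2 hQ
  have hQB : Q (Ioi B) = 0 :=
    measure_mono_null (t := (Icc 0 B)ᶜ) (fun _ hs h => h.2.not_gt hs) hQ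
  refine hM.lintegral_hitTime hX hρ hX0 hQB
    (integral_nonneg_of_ae (hQ'.mono fun s hs => hρnn s hs.1 B)) fun x hx => ?_
  by_cases hx0 : 0 ≤ x
  · exact (hinv x ⟨hx0, hx⟩).symm
  have hQx : Q (Iic x) = 0 :=
    measure_mono_null (t := (Icc 0 B)ᶜ) (fun s hs h => hx0 (h.1.trans hs)) hQ
  rw [hQx, integral_eq_zero_of_ae (hQ'.mono fun s hs => hρneg s hs.1 x (not_le.1 hx0))]
  simp

end MarkovChain

theorem expected_exit_time_monotone_in_level_general
    (ρ : ℝ → ℝ → ℝ)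
    (K : ℝ → Measure ℝ)
    (hKprob : ∀ t : ℝ, IsProbabilityMeasure (K t))
    (hKsupp : ∀ t : ℝ, K t (Set.Iio (0 : ℝ)) = 0)
    (hρK : ∀ t x : ℝ, 0 ≤ t → (K t (Set.Iic x)).toReal = ρ t x)
    (hρmeas : ∀ x : ℝ, Measurable fun s : ℝ => ρ s x)
    (A₀ : ℝ) (hA₀ : 0 ≤ A₀)
    (hρpos : ∀ A : ℝ, A₀ < A → ∀ t ∈ Set.Icc (0 : ℝ) A, 0 < ρ t A)
    -- the conditioned kernel `κ A`
    (κ : ℝ → ℝ → Measure ℝ)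
    (hκmeas : ∀ A : ℝ, Measurable (κ A))
    (hκ : ∀ A : ℝ, A₀ < A → ∀ t ∈ Set.Icc (0 : ℝ) A,
      κ A t = (K t (Set.Iic A))⁻¹ • (K t).restrict (Set.Iic A))
    -- the quasistationary distribution `Q A`
    (Q : ℝ → Measure ℝ)
    (hQprob : ∀ A : ℝ, A₀ < A → IsProbabilityMeasure (Q A))
    (hQsupp : ∀ A : ℝ, A₀ < A → Q A (Set.Icc (0 : ℝ) A)ᶜ = 0)
    -- (C1): quasistationarity
    (hC1 : ∀ A : ℝ, A₀ < A → ∀ μ : Measure ℝ, IsProbabilityMeasure μ →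
      μ (Set.Icc (0 : ℝ) A)ᶜ = 0 → ∀ x : ℝ,
      Tendsto (fun n : ℕ => ((fun m : Measure ℝ => m.bind (κ A))^[n] μ) (Set.Iic x))
        atTop (𝓝 (Q A (Set.Iic x))))
    -- in particular, `Q A` is invariant for the conditioned kernel `κ A`
    (hInv : ∀ A : ℝ, A₀ < A → ∀ x ∈ Set.Icc (0 : ℝ) A,
      (Q A (Set.Iic x)).toReal * ∫ s, ρ s A ∂(Q A) = ∫ s, ρ s x ∂(Q A))
    -- (C2)
    (hC2 : ∀ x : ℝ, ∀ s s' : ℝ, 0 ≤ s → s ≤ s' → ρ s' x ≤ ρ s x)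
    -- (C3)
    (hC3 : ∀ s x : ℝ, 0 ≤ s → 0 ≤ x → ∀ t t' : ℝ, 0 < t → t ≤ t' →
      ρ (t * s) (t * x) ≤ ρ (t' * s) (t' * x))
    -- (C4)
    (hC4 : ∀ B : ℝ, 0 < B → ∀ x : ℝ, x ≤ B → ∀ s s' : ℝ, 0 ≤ s → s ≤ s' →
      0 < ρ s B → 0 < ρ s' B → ρ s' x / ρ s' B ≤ ρ s x / ρ s B)
    -- (C5)
    (hC5 : ∀ s : ℝ, 0 ≤ s → ∀ B : ℝ, 0 < B → ∀ x : ℝ, x ≤ B →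
      ∀ t t' : ℝ, 0 < t → t ≤ t' →
      0 < ρ (t * s) (t * B) → 0 < ρ (t' * s) (t' * B) →
      ρ (t * s) (t * x) / ρ (t * s) (t * B) ≤ ρ (t' * s) (t' * x) / ρ (t' * s) (t' * B))
    (A : ℝ) (hA : A₀ < A) (y : ℝ) (hy : 1 ≤ y)
    -- the Markov chain `(M_n)` with transition function `ρ` and `M_0 ∼ Q_A`, and the
    -- Markov chain `(N_n)` with transition function `ρ` and `N_0 ∼ Q_{yA}`
    (Ω : Type*) [MeasurableSpace Ω] (P : Measure Ω) (hP : IsProbabilityMeasure P)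
    (M N : ℕ → Ω → ℝ)
    (hMmeas : ∀ n : ℕ, Measurable (M n)) (hNmeas : ∀ n : ℕ, Measurable (N n))
    (hM0 : P.map (M 0) = Q A)
    (hN0 : P.map (N 0) = Q (y * A))
    (hMarkovM : ∀ n : ℕ, ∀ x : ℝ,
      P[fun ω => (Set.Iic x).indicator (fun _ => (1 : ℝ)) (M (n + 1) ω) |
        ⨆ i ∈ Finset.range (n + 1), MeasurableSpace.comap (M i) Real.measurableSpace]
      =ᵐ[P] fun ω => ρ (M n ω) x)
    (hMarkovN : ∀ n : ℕ, ∀ x : ℝ,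
      P[fun ω => (Set.Iic x).indicator (fun _ => (1 : ℝ)) (N (n + 1) ω) |
        ⨆ i ∈ Finset.range (n + 1), MeasurableSpace.comap (N i) Real.measurableSpace]
      =ᵐ[P] fun ω => ρ (N n ω) x) :
    ∫⁻ ω, hitTime M A ω ∂P ≤ ∫⁻ ω, hitTime N (y * A) ω ∂P := by
  have hA0 : 0 < A := hA₀.trans_lt hA
  have hy0 : 0 < y := one_pos.trans_le hy
  have hyA0 : 0 < y * A := mul_pos hy0 hA0
  have hyA : A₀ < y * A := hA.trans_le (le_mul_of_one_le_left hA0.le hy)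
  have := hQprob A hA
  have := hQprob (y * A) hyA
  have hρ : ∀ t, 0 ≤ t → ∀ x, ρ t x ∈ Icc 0 1 := fun t ht x => hρK t x ht ▸
    ⟨ENNReal.toReal_nonneg, ENNReal.toReal_le_of_le_ofReal zero_le_one (by simpa using prob_le_one)⟩
  have hρneg : ∀ t, 0 ≤ t → ∀ x < 0, ρ t x = 0 := fun t ht x hx => by
    rw [← hρK t x ht, measure_mono_null (Iic_subset_Iio.2 hx) (hKsupp t), ENNReal.toReal_zero]
  have hcond : ∀ B, A₀ < B → IsConditionedKernel ρ B (κ B) := fun B hB =>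
    isConditionedKernel_of_eq_cond hKsupp hρK (hκmeas B) (hρpos B hB) (hκ B hB)
  have hC4' : ∀ x ≤ y * A, AntitoneOn (fun s => ρ s x / ρ s (y * A)) (Icc 0 (y * A)) :=
    fun x hx s hs s' hs' hss' => hC4 _ hyA0 x hx s s' hs.1 hss'
      ((hcond _ hyA).pos s hs) ((hcond _ hyA).pos s' hs')
  have hC5' : ∀ s ∈ Icc 0 A, ∀ x ≤ A,
      ρ s x / ρ s A ≤ ρ (y * s) (y * x) / ρ (y * s) (y * A) := fun s hs x hx => by
    simpa using hC5 s hs.1 A hA0 x hx 1 y one_pos hy (by simpa using (hcond A hA).pos s hs)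
      ((hcond _ hyA).pos _ ⟨mul_nonneg hy0.le hs.1, by nlinarith [hs.2]⟩)
  have hQ : ∀ x, Q A (Iic x) ≤ Q (y * A) (Iic (y * x)) := fun x =>
    le_of_tendsto_of_tendsto' (hC1 A hA _ inferInstance (dirac_zero_compl_Icc hA0.le) x)
      (hC1 _ hyA _ inferInstance (dirac_zero_compl_Icc hyA0.le) (y * x))
      fun n => iterate_bind_dirac_measure_Iic_le hA0 hy (hcond A hA) (hcond _ hyA) hC4' hC5' n x
  have hβ := integral_le_integral_of_measure_Iic_le_mul hA0 hy hρ hρmeas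
    (fun s hs s' _ hss' => hC2 A s s' hs.1 hss') (fun s hs => by
      simpa using hC3 s A hs.1 hA0.le 1 y one_pos hy) (hQsupp A hA) (hQsupp _ hyA) hQ
  rw [HasTransitionCDF.lintegral_hitTime_of_invariant hMarkovM hMmeas hρmeas
      (fun s hs x => (hρ s hs x).1) hρneg hM0 (hQsupp A hA) (hInv A hA),
    HasTransitionCDF.lintegral_hitTime_of_invariant hMarkovN hNmeas hρmeas
      (fun s hs x => (hρ s hs x).1) hρneg hN0 (hQsupp _ hyA) (hInv _ hyA)]
  exact ENNReal.inv_le_inv.2 (tsub_le_tsub_left (ENNReal.ofReal_le_ofReal hβ) 1)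

/-- **Monotonicity in the level of the expected first exit time started at the
quasistationary distribution.**
Let `ρ(t,x) = K t (Iic x)` be a stationary Markov transition function on `[0,∞)`.
For `A > A₀` the conditioned kernel `κ A` on `[0,A]` is the normalized restriction of
`K` to `(-∞,A]` (transition CDF `x ↦ ρ(t,x)/ρ(t,A)`), and the quasistationary
distribution `Q A` is the pointwise limit of the `n`-step CDFs of the conditioned chain
for every initial distribution on `[0,A]`; in particular `Q A` is invariant for `κ A`.
Assume conditions (C1)–(C5) and that `∫ ρ(s,A) dQ_A(s) < 1`,
`∫ ρ(s,yA) dQ_{yA}(s) < 1`.  Let `(M_n)` and `(N_n)` be Markov chains with transition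
function `ρ` started at `M_0 ∼ Q_A` and `N_0 ∼ Q_{yA}` respectively.  Then for every
`A > A₀` and `y ≥ 1`, the expected exit times satisfy
`E[T_A^{Q_A}] ≤ E[T_{yA}^{Q_{yA}}]`. -/
theorem expected_exit_time_monotone_in_level
    (ρ : ℝ → ℝ → ℝ)
    (K : ℝ → Measure ℝ)
    (hKmeas : Measurable K)
    (hKprob : ∀ t : ℝ, IsProbabilityMeasure (K t))
    (hKsupp : ∀ t : ℝ, K t (Set.Iio (0 : ℝ)) = 0)
    (hρK : ∀ t x : ℝ, 0 ≤ t → (K t (Set.Iic x)).toReal = ρ t x)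
    (hρmeas : ∀ x : ℝ, Measurable fun s : ℝ => ρ s x)
    (A₀ : ℝ) (hA₀ : 0 ≤ A₀)
    (hρpos : ∀ A : ℝ, A₀ < A → ∀ t ∈ Set.Icc (0 : ℝ) A, 0 < ρ t A)
    -- the conditioned kernel `κ A`
    (κ : ℝ → ℝ → Measure ℝ)
    (hκmeas : ∀ A : ℝ, Measurable (κ A))
    (hκ : ∀ A : ℝ, A₀ < A → ∀ t ∈ Set.Icc (0 : ℝ) A,
      κ A t = (K t (Set.Iic A))⁻¹ • (K t).restrict (Set.Iic A))
    -- the quasistationary distribution `Q A`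
    (Q : ℝ → Measure ℝ)
    (hQprob : ∀ A : ℝ, A₀ < A → IsProbabilityMeasure (Q A))
    (hQsupp : ∀ A : ℝ, A₀ < A → Q A (Set.Icc (0 : ℝ) A)ᶜ = 0)
    -- (C1): quasistationarity
    (hC1 : ∀ A : ℝ, A₀ < A → ∀ μ : Measure ℝ, IsProbabilityMeasure μ →
      μ (Set.Icc (0 : ℝ) A)ᶜ = 0 → ∀ x : ℝ,
      Tendsto (fun n : ℕ => ((fun m : Measure ℝ => m.bind (κ A))^[n] μ) (Set.Iic x))
        atTop (𝓝 (Q A (Set.Iic x))))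
    (hC1zero : ∀ A : ℝ, A₀ < A → Q A {(0 : ℝ)} = 0)
    -- in particular, `Q A` is invariant for the conditioned kernel `κ A`
    (hInv : ∀ A : ℝ, A₀ < A → ∀ x ∈ Set.Icc (0 : ℝ) A,
      (Q A (Set.Iic x)).toReal * ∫ s, ρ s A ∂(Q A) = ∫ s, ρ s x ∂(Q A))
    -- (C2)
    (hC2 : ∀ x : ℝ, ∀ s s' : ℝ, 0 ≤ s → s ≤ s' → ρ s' x ≤ ρ s x)
    -- (C3)
    (hC3 : ∀ s x : ℝ, 0 ≤ s → 0 ≤ x → ∀ t t' : ℝ, 0 < t → t ≤ t' →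
      ρ (t * s) (t * x) ≤ ρ (t' * s) (t' * x))
    -- (C4)
    (hC4 : ∀ B : ℝ, 0 < B → ∀ x : ℝ, x ≤ B → ∀ s s' : ℝ, 0 ≤ s → s ≤ s' →
      0 < ρ s B → 0 < ρ s' B → ρ s' x / ρ s' B ≤ ρ s x / ρ s B)
    -- (C5)
    (hC5 : ∀ s : ℝ, 0 ≤ s → ∀ B : ℝ, 0 < B → ∀ x : ℝ, x ≤ B →
      ∀ t t' : ℝ, 0 < t → t ≤ t' →
      0 < ρ (t * s) (t * B) → 0 < ρ (t' * s) (t' * B) →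
      ρ (t * s) (t * x) / ρ (t * s) (t * B) ≤ ρ (t' * s) (t' * x) / ρ (t' * s) (t' * B))
    (A : ℝ) (hA : A₀ < A) (y : ℝ) (hy : 1 ≤ y)
    -- finiteness of the expectations
    (hβA : ∫ s, ρ s A ∂(Q A) < 1)
    (hβyA : ∫ s, ρ s (y * A) ∂(Q (y * A)) < 1)
    -- the Markov chain `(M_n)` with transition function `ρ` and `M_0 ∼ Q_A`, and the
    -- Markov chain `(N_n)` with transition function `ρ` and `N_0 ∼ Q_{yA}`
    (Ω : Type*) [MeasurableSpace Ω] (P : Measure Ω) (hP : IsProbabilityMeasure P)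
    (M N : ℕ → Ω → ℝ)
    (hMmeas : ∀ n : ℕ, Measurable (M n)) (hNmeas : ∀ n : ℕ, Measurable (N n))
    (hM0 : P.map (M 0) = Q A)
    (hN0 : P.map (N 0) = Q (y * A))
    (hMarkovM : ∀ n : ℕ, ∀ x : ℝ,
      P[fun ω => (Set.Iic x).indicator (fun _ => (1 : ℝ)) (M (n + 1) ω) |
        ⨆ i ∈ Finset.range (n + 1), MeasurableSpace.comap (M i) Real.measurableSpace]
      =ᵐ[P] fun ω => ρ (M n ω) x)
    (hMarkovN : ∀ n : ℕ, ∀ x : ℝ,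
      P[fun ω => (Set.Iic x).indicator (fun _ => (1 : ℝ)) (N (n + 1) ω) |
        ⨆ i ∈ Finset.range (n + 1), MeasurableSpace.comap (N i) Real.measurableSpace]
      =ᵐ[P] fun ω => ρ (N n ω) x) :
    ∫⁻ ω, hitTime M A ω ∂P ≤ ∫⁻ ω, hitTime N (y * A) ω ∂P :=
  expected_exit_time_monotone_in_level_general ρ K hKprob hKsupp hρK hρmeas A₀ hA₀ hρpos κ hκmeas hκ
    Q hQprob hQsupp hC1 hInv hC2 hC3 hC4 hC5 A hA y hy Ω P hP M N hMmeas hNmeas hM0 hN0 hMarkovM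
    hMarkovN
end Domination
end

section
/- (Preservation of stochastic order by the pair of conditioned kernels.) Let y ≥ 1 and A > 0, and assume conditions (C4) and (C5) hold with ρ(t, yA) > 0 and ρ(t/y, A) > 0 for all t ∈ [0, yA]. Let κ_V be the Markov kernel on [0,yA] whose transition CDF from state t is x ↦ ρ(t,x)/ρ(t,yA), and let κ_W be the Markov kernel on [0,yA] whose transition CDF from state t is x ↦ ρ(t/y, x/y)/ρ(t/y, A). If μ and ν are probability measures on [0,yA] with μ([0,x]) ≥ ν([0,x]) for all x (μ stochastically smaller than ν), then the one-step distributions satisfy (μ κ_V)([0,x]) ≥ (ν κ_W)([0,x]) for all x ∈ [0, yA], where μκ denotes the distribution ∫ κ(t, ·) dμ(t). -/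
open MeasureTheory Set

/-! By (C4) the `κV`-mass of `(-∞, x]` seen from the state `t`, namely `ρ(t,x)/ρ(t,yA)`, is
antitone in `t`, and by (C5) applied to the scales `1 ≤ y` it dominates the `κW`-mass of
`(-∞, x]` seen from `t`. The superlevel sets of an antitone function are lower sets, which
`μ` charges at least as much as `ν`, so by the layer-cake formula an antitone function has
a larger integral against `μ` than against `ν`. Hence
`(ν κW)(-∞, x] ≤ ∫ ρ(t,x)/ρ(t,yA) dν(t) ≤ ∫ ρ(t,x)/ρ(t,yA) dμ(t) = (μ κV)(-∞, x]`. -/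

theorem IsLowerSet.measure_le_of_measure_Iic_le {μ ν : Measure ℝ}
    (hdom : ∀ x, ν (Iic x) ≤ μ (Iic x)) {L : Set ℝ} (hL : IsLowerSet L) : ν L ≤ μ L := by
  -- being order-connected, `L` carries the order topology, so `atTop` on `L` is countably generated.
  have : OrdConnected L := hL.ordConnected
  have hmono : Monotone fun x : L ↦ Iic (x : ℝ) := fun _ _ h ↦ Iic_subset_Iic.2 h
  have hL_eq : ⋃ x : L, Iic (x : ℝ) = L :=
    Subset.antisymm (iUnion_subset fun x _ hy ↦ hL hy x.2)
      fun a ha ↦ mem_iUnion.2 ⟨⟨a, ha⟩, mem_Iic.2 le_rfl⟩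
  rw [← hL_eq, hmono.measure_iUnion, hmono.measure_iUnion]
  exact iSup_mono fun x ↦ hdom x

theorem Antitone.lintegral_ofReal_le_of_measure_Iic_le {μ ν : Measure ℝ}
    (hdom : ∀ x, ν (Iic x) ≤ μ (Iic x)) {g : ℝ → ℝ} (hg : Antitone g) :
    ∫⁻ t, ENNReal.ofReal (g t) ∂ν ≤ ∫⁻ t, ENNReal.ofReal (g t) ∂μ := by
  have hg_max : Antitone fun t ↦ max (g t) 0 := fun _ _ h ↦ max_le_max_right 0 (hg h)
  have hlayer (m : Measure ℝ) :=
    lintegral_eq_lintegral_meas_lt m (.of_forall fun t ↦ le_max_right (g t) 0)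
      hg_max.measurable.aemeasurable
  simp only [ENNReal.ofReal_max, ENNReal.ofReal_zero, max_eq_left zero_le] at hlayer
  rw [hlayer, hlayer]
  exact lintegral_mono fun s ↦
    IsLowerSet.measure_le_of_measure_Iic_le hdom fun _ _ hba ha ↦ ha.trans_le (hg_max hba)

theorem MeasureTheory.Measure.bind_apply_le_bind_apply_of_antitone {μ ν : Measure ℝ} {κ κ' : ℝ → Measure ℝ}
    {S E : Set ℝ} (hdom : ∀ x, ν (Iic x) ≤ μ (Iic x)) (hμS : μ Sᶜ = 0) (hνS : ν Sᶜ = 0)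
    (hκ : Measurable κ) (hκ' : Measurable κ') [∀ t, IsFiniteMeasure (κ' t)]
    (hE : MeasurableSet E) {g : ℝ → ℝ} (hg : Antitone g)
    (hκ'g : ∀ t ∈ S, (κ' t E).toReal ≤ g t) (hgκ : ∀ t ∈ S, g t ≤ (κ t E).toReal) :
    ν.bind κ' E ≤ μ.bind κ E := by
  rw [Measure.bind_apply hE hκ'.aemeasurable, Measure.bind_apply hE hκ.aemeasurable]
  calc ∫⁻ t, κ' t E ∂ν ≤ ∫⁻ t, ENNReal.ofReal (g t) ∂ν :=
        lintegral_mono_ae <| (ae_iff.2 hνS).mono fun t ht ↦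
          (ENNReal.ofReal_toReal (measure_ne_top _ _)).ge.trans
            (ENNReal.ofReal_le_ofReal (hκ'g t ht))
    _ ≤ ∫⁻ t, ENNReal.ofReal (g t) ∂μ := hg.lintegral_ofReal_le_of_measure_Iic_le hdom
    _ ≤ ∫⁻ t, κ t E ∂μ :=
        lintegral_mono_ae <| (ae_iff.2 hμS).mono fun t ht ↦
          (ENNReal.ofReal_le_ofReal (hgκ t ht)).trans ENNReal.ofReal_toReal_le

theorem one_step_preservation_of_stochastic_order_general
    (ρ : ℝ → ℝ → ℝ)
    -- (C4)
    (hC4 : ∀ B : ℝ, 0 < B → ∀ x : ℝ, x ≤ B → ∀ s s' : ℝ, 0 ≤ s → s ≤ s' →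
      0 < ρ s B → 0 < ρ s' B → ρ s' x / ρ s' B ≤ ρ s x / ρ s B)
    -- (C5)
    (hC5 : ∀ s : ℝ, 0 ≤ s → ∀ B : ℝ, 0 < B → ∀ x : ℝ, x ≤ B →
      ∀ t t' : ℝ, 0 < t → t ≤ t' →
      0 < ρ (t * s) (t * B) → 0 < ρ (t' * s) (t' * B) →
      ρ (t * s) (t * x) / ρ (t * s) (t * B) ≤ ρ (t' * s) (t' * x) / ρ (t' * s) (t' * B))
    (y A : ℝ) (hy : 1 ≤ y) (hA : 0 < A)
    (hposV : ∀ t ∈ Set.Icc (0 : ℝ) (y * A), 0 < ρ t (y * A))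
    (hposW : ∀ t ∈ Set.Icc (0 : ℝ) (y * A), 0 < ρ (t / y) A)
    (κV κW : ℝ → Measure ℝ)
    (hκVmeas : Measurable κV) (hκWmeas : Measurable κW)
    (hκWprob : ∀ t, IsProbabilityMeasure (κW t))
    (hκVcdf : ∀ t ∈ Set.Icc (0 : ℝ) (y * A), ∀ x ∈ Set.Icc (0 : ℝ) (y * A),
      (κV t (Set.Iic x)).toReal = ρ t x / ρ t (y * A))
    (hκWcdf : ∀ t ∈ Set.Icc (0 : ℝ) (y * A), ∀ x ∈ Set.Icc (0 : ℝ) (y * A),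
      (κW t (Set.Iic x)).toReal = ρ (t / y) (x / y) / ρ (t / y) A)
    (μ ν : Measure ℝ)
    (hμsupp : μ (Set.Icc (0 : ℝ) (y * A))ᶜ = 0)
    (hνsupp : ν (Set.Icc (0 : ℝ) (y * A))ᶜ = 0)
    -- `μ` stochastically smaller than `ν`
    (hdom : ∀ x : ℝ, ν (Set.Iic x) ≤ μ (Set.Iic x)) :
    ∀ x ∈ Set.Icc (0 : ℝ) (y * A), ν.bind κW (Set.Iic x) ≤ μ.bind κV (Set.Iic x) := by
  intro x hx
  have hy0 : 0 < y := one_pos.trans_le hy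
  have hyA : 0 ≤ y * A := by positivity
  -- clamping the state to `[0, yA]`, where (C4) applies, gives an antitone function on `ℝ`
  have hV_antitone : Antitone (IccExtend hyA fun t ↦ ρ t x / ρ t (y * A)) := by
    refine Antitone.comp_monotone (fun s s' hss' ↦ ?_) (monotone_projIcc hyA)
    exact hC4 (y * A) (by positivity) x hx.2 s s' s.2.1 hss' (hposV s s.2) (hposV s' s'.2)
  -- (C5) applied to the scales `1 ≤ y`, at the state `t / y` and the levels `x / y ≤ A`
  have hW_le_V : ∀ t ∈ Icc (0 : ℝ) (y * A),
      ρ (t / y) (x / y) / ρ (t / y) A ≤ ρ t x / ρ t (y * A) := by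
    intro t ht
    have hxA : x / y ≤ A := (div_le_iff₀ hy0).2 (by linarith [hx.2])
    have := hC5 (t / y) (div_nonneg ht.1 hy0.le) A hA (x / y) hxA 1 y one_pos hy
    simp only [one_mul, mul_div_cancel₀ _ hy0.ne'] at this
    exact this (hposW t ht) (hposV t ht)
  refine Measure.bind_apply_le_bind_apply_of_antitone hdom hμsupp hνsupp hκVmeas hκWmeas
    measurableSet_Iic hV_antitone (fun t ht ↦ ?_) (fun t ht ↦ ?_)
  · rw [hκWcdf t ht x hx, IccExtend_of_mem hyA _ ht]
    exact hW_le_V t ht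
  · rw [hκVcdf t ht x hx, IccExtend_of_mem hyA _ ht]

/-- **Preservation of stochastic order by the pair of conditioned kernels.**
Let `y ≥ 1`, `A > 0`, and let `ρ` satisfy (C4) and (C5), with `ρ(t,yA) > 0` and
`ρ(t/y, A) > 0` for all `t ∈ [0,yA]`.  Let `κV` be the Markov kernel on `[0,yA]` whose
transition CDF from state `t` is `x ↦ ρ(t,x)/ρ(t,yA)`, and `κW` the Markov kernel on
`[0,yA]` whose transition CDF from state `t` is `x ↦ ρ(t/y, x/y)/ρ(t/y, A)`.
If `μ` and `ν` are probability measures on `[0,yA]` with `μ((-∞,x]) ≥ ν((-∞,x])` for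
all `x` (i.e. `μ` stochastically smaller than `ν`), then the one-step distributions
satisfy `(μ κV)((-∞,x]) ≥ (ν κW)((-∞,x])` for all `x ∈ [0,yA]`. -/
theorem one_step_preservation_of_stochastic_order
    (ρ : ℝ → ℝ → ℝ)
    (hρ01 : ∀ t x : ℝ, 0 ≤ ρ t x ∧ ρ t x ≤ 1)
    (hρmono : ∀ t : ℝ, Monotone (ρ t))
    -- (C4)
    (hC4 : ∀ B : ℝ, 0 < B → ∀ x : ℝ, x ≤ B → ∀ s s' : ℝ, 0 ≤ s → s ≤ s' →
      0 < ρ s B → 0 < ρ s' B → ρ s' x / ρ s' B ≤ ρ s x / ρ s B)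
    -- (C5)
    (hC5 : ∀ s : ℝ, 0 ≤ s → ∀ B : ℝ, 0 < B → ∀ x : ℝ, x ≤ B →
      ∀ t t' : ℝ, 0 < t → t ≤ t' →
      0 < ρ (t * s) (t * B) → 0 < ρ (t' * s) (t' * B) →
      ρ (t * s) (t * x) / ρ (t * s) (t * B) ≤ ρ (t' * s) (t' * x) / ρ (t' * s) (t' * B))
    (y A : ℝ) (hy : 1 ≤ y) (hA : 0 < A)
    (hposV : ∀ t ∈ Set.Icc (0 : ℝ) (y * A), 0 < ρ t (y * A))
    (hposW : ∀ t ∈ Set.Icc (0 : ℝ) (y * A), 0 < ρ (t / y) A)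
    (κV κW : ℝ → Measure ℝ)
    (hκVmeas : Measurable κV) (hκWmeas : Measurable κW)
    (hκVprob : ∀ t, IsProbabilityMeasure (κV t))
    (hκWprob : ∀ t, IsProbabilityMeasure (κW t))
    (hκVsupp : ∀ t ∈ Set.Icc (0 : ℝ) (y * A), κV t (Set.Icc (0 : ℝ) (y * A))ᶜ = 0)
    (hκWsupp : ∀ t ∈ Set.Icc (0 : ℝ) (y * A), κW t (Set.Icc (0 : ℝ) (y * A))ᶜ = 0)
    (hκVcdf : ∀ t ∈ Set.Icc (0 : ℝ) (y * A), ∀ x ∈ Set.Icc (0 : ℝ) (y * A),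
      (κV t (Set.Iic x)).toReal = ρ t x / ρ t (y * A))
    (hκWcdf : ∀ t ∈ Set.Icc (0 : ℝ) (y * A), ∀ x ∈ Set.Icc (0 : ℝ) (y * A),
      (κW t (Set.Iic x)).toReal = ρ (t / y) (x / y) / ρ (t / y) A)
    (μ ν : Measure ℝ)
    (hμprob : IsProbabilityMeasure μ) (hνprob : IsProbabilityMeasure ν)
    (hμsupp : μ (Set.Icc (0 : ℝ) (y * A))ᶜ = 0)
    (hνsupp : ν (Set.Icc (0 : ℝ) (y * A))ᶜ = 0)
    -- `μ` stochastically smaller than `ν`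
    (hdom : ∀ x : ℝ, ν (Set.Iic x) ≤ μ (Set.Iic x)) :
    ∀ x ∈ Set.Icc (0 : ℝ) (y * A), ν.bind κW (Set.Iic x) ≤ μ.bind κV (Set.Iic x) :=
  one_step_preservation_of_stochastic_order_general ρ hC4 hC5 y A hy hA hposV hposW κV κW hκVmeas
    hκWmeas hκWprob hκVcdf hκWcdf μ ν hμsupp hνsupp hdom
end

section
/- (Stochastic domination of conditioned chains at every epoch.) Let y ≥ 1 and A > 0, and assume conditions (C4) and (C5) hold with ρ(t, yA) > 0 and ρ(t/y, A) > 0 for all t ∈ [0, yA]. Let (V_n) be the Markov chain on [0,yA] with transition CDF x ↦ ρ(t,x)/ρ(t,yA) from state t, let (U_n) be the Markov chain on [0,A] with transition CDF x ↦ ρ(t,x)/ρ(t,A) from state t, and set W_n = y·U_n. If V_0 and W_0 = y·U_0 have the same distribution, then for every n ≥ 0 and every x, P(V_n ≤ x) ≥ P(W_n ≤ x), i.e. V_n is stochastically smaller than W_n. -/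
/-!
`Wₙ = y·Uₙ` is again a Markov chain; from state `w` its kernel has CDF
`x ↦ ρ(w/y, x/y)/ρ(w/y, A)` on `[0, yA]`. Condition (C5) with `t = 1`, `t' = y` says that this
CDF lies below the CDF `Fᵥ(w, ·)` of the `V` kernel, and (C4) says that `w ↦ Fᵥ(w, x)` is
decreasing. So if the CDF of `Wₙ` lies below that of `Vₙ`, then
`P(Wₙ₊₁ ≤ x) ≤ ∫ Fᵥ(w, x) dP_{Wₙ}(w) ≤ ∫ Fᵥ(w, x) dP_{Vₙ}(w) = P(Vₙ₊₁ ≤ x)`, the second step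
because a decreasing function has the larger integral against the law with the larger CDF
(layer-cake formula: its superlevel sets are lower sets).
-/

open MeasureTheory Set
open scoped ENNReal

section StochasticOrder

variable {α : Type*} [LinearOrder α] [TopologicalSpace α] [MeasurableSpace α]

theorem measure_le_of_isLowerSet [OrderTopology α] [SecondCountableTopology α]
    {μ ν : Measure α} (h : ∀ x, ν (Iic x) ≤ μ (Iic x)) {S : Set α} (hS : IsLowerSet S) :
    ν S ≤ μ S := by
  -- makes `atTop` on the subtype `S` countably generated, so continuity from below applies
  have := hS.ordConnected
  have hS_eq : S = ⋃ x : S, Iic (x : α) :=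
    Subset.antisymm (fun s hs => mem_iUnion.2 ⟨⟨s, hs⟩, le_rfl⟩)
      (iUnion_subset fun x _ hy => hS hy x.2)
  have hmono : Monotone fun x : S => Iic (x : α) := fun _ _ hxy => Iic_subset_Iic.2 hxy
  rw [hS_eq, hmono.measure_iUnion, hmono.measure_iUnion]
  exact iSup_mono fun x => h x

theorem lintegral_le_of_antitone [OrderTopology α] [SecondCountableTopology α] [BorelSpace α]
    {μ ν : Measure α} (h : ∀ x, ν (Iic x) ≤ μ (Iic x)) {g : α → ℝ≥0∞} (hg : Antitone g)
    (hg_top : ∀ a, g a ≠ ∞) : ∫⁻ a, g a ∂ν ≤ ∫⁻ a, g a ∂μ := by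
  have hf : Antitone fun a => (g a).toReal := fun a b hab =>
    ENNReal.toReal_mono (hg_top a) (hg hab)
  have hg_eq : g = fun a => ENNReal.ofReal (g a).toReal :=
    funext fun a => (ENNReal.ofReal_toReal (hg_top a)).symm
  rw [hg_eq, lintegral_eq_lintegral_meas_lt ν (.of_forall fun _ => ENNReal.toReal_nonneg)
      hf.measurable.aemeasurable, lintegral_eq_lintegral_meas_lt μ
      (.of_forall fun _ => ENNReal.toReal_nonneg) hf.measurable.aemeasurable]
  exact lintegral_mono fun t =>
    measure_le_of_isLowerSet h fun a b hab hb => hb.trans_le (hf hab)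

theorem lintegral_le_of_antitoneOn_Icc [OrderTopology α] [SecondCountableTopology α]
    [BorelSpace α] {μ ν : Measure α} (h : ∀ x, ν (Iic x) ≤ μ (Iic x)) {a b : α} (hab : a ≤ b)
    (hν : ν (Icc a b)ᶜ = 0) (hμ : μ (Icc a b)ᶜ = 0) {g : α → ℝ≥0∞}
    (hg : AntitoneOn g (Icc a b)) (hg_top : ∀ a, g a ≠ ∞) :
    ∫⁻ a, g a ∂ν ≤ ∫⁻ a, g a ∂μ := by
  set G : α → ℝ≥0∞ := fun x => g (projIcc a b hab x)
  have hG : Antitone G := fun x y hxy =>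
    hg (projIcc a b hab x).2 (projIcc a b hab y).2 (monotone_projIcc hab hxy)
  have hgG : ∀ ρ : Measure α, ρ (Icc a b)ᶜ = 0 → g =ᵐ[ρ] G := fun ρ hρ => by
    filter_upwards [mem_ae_iff.2 hρ] with x hx
    simp only [G, projIcc_of_mem hab hx]
  rw [lintegral_congr_ae (hgG ν hν), lintegral_congr_ae (hgG μ hμ)]
  exact lintegral_le_of_antitone h hG fun x => hg_top _

theorem measure_Iic_le_of_forall_mem_Icc [ClosedIicTopology α] [OpensMeasurableSpace α]
    {μ ν : Measure α} [IsProbabilityMeasure μ] [IsProbabilityMeasure ν] {a b : α}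
    (hν : ν (Icc a b)ᶜ = 0) (hμ : μ (Icc a b)ᶜ = 0)
    (h : ∀ x ∈ Icc a b, ν (Iic x) ≤ μ (Iic x)) (x : α) : ν (Iic x) ≤ μ (Iic x) := by
  rcases lt_or_ge x a with hxa | hax
  · have : Iic x ⊆ (Icc a b)ᶜ := fun t ht htab => (ht.trans_lt hxa).not_ge htab.1
    simp [measure_mono_null this hν]
  rcases le_or_gt x b with hxb | hbx
  · exact h x ⟨hax, hxb⟩
  · have : (Iic x)ᶜ ⊆ (Icc a b)ᶜ := fun t ht htab => ht (htab.2.trans hbx.le)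
    rw [(prob_compl_eq_zero_iff measurableSet_Iic).1 (measure_mono_null this hμ)]
    exact prob_le_one

end StochasticOrder

theorem bind_compl_eq_zero {α β : Type*} [MeasurableSpace α] [MeasurableSpace β]
    {m : Measure α} {κ : α → Measure β} (hκ : Measurable κ) {s : Set α} {t : Set β}
    (ht : MeasurableSet t) (hm : m sᶜ = 0) (hκs : ∀ w ∈ s, κ w tᶜ = 0) :
    m.bind κ tᶜ = 0 := by
  rw [Measure.bind_apply ht.compl hκ.aemeasurable]
  refine (lintegral_congr_ae ?_).trans lintegral_zero
  filter_upwards [mem_ae_iff.2 hm] with w hw using hκs w hw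

theorem iterate_bind_compl_eq_zero {α : Type*} [MeasurableSpace α]
    {m : Measure α} {κ : α → Measure α} (hκ : Measurable κ) {s : Set α}
    (hs : MeasurableSet s) (hm : m sᶜ = 0) (hκs : ∀ w ∈ s, κ w sᶜ = 0) (n : ℕ) :
    ((fun m => m.bind κ)^[n] m) sᶜ = 0 := by
  induction n with
  | zero => exact hm
  | succ n ih =>
    rw [Function.iterate_succ_apply']
    exact bind_compl_eq_zero hκ hs ih hκs

theorem bind_Iic_le_bind_Iic_of_antitoneOn {α : Type*} [LinearOrder α] [TopologicalSpace α]
    [OrderTopology α] [SecondCountableTopology α] [MeasurableSpace α] [BorelSpace α]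
    {ν m : Measure α} {κ' κ : α → Measure α} (hκ' : Measurable κ') (hκ : Measurable κ)
    (hκ_fin : ∀ w, IsFiniteMeasure (κ w)) {a b : α} (hab : a ≤ b)
    (hν : ν (Icc a b)ᶜ = 0) (hm : m (Icc a b)ᶜ = 0) (hνm : ∀ x, ν (Iic x) ≤ m (Iic x))
    (hκ'κ : ∀ w ∈ Icc a b, ∀ x, κ' w (Iic x) ≤ κ w (Iic x))
    (hκ_anti : ∀ x, AntitoneOn (fun w => κ w (Iic x)) (Icc a b)) (x : α) :
    ν.bind κ' (Iic x) ≤ m.bind κ (Iic x) := by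
  rw [Measure.bind_apply measurableSet_Iic hκ'.aemeasurable,
    Measure.bind_apply measurableSet_Iic hκ.aemeasurable]
  calc ∫⁻ w, κ' w (Iic x) ∂ν ≤ ∫⁻ w, κ w (Iic x) ∂ν := lintegral_mono_ae <| by
        filter_upwards [mem_ae_iff.2 hν] with w hw using hκ'κ w hw x
    _ ≤ ∫⁻ w, κ w (Iic x) ∂m :=
        lintegral_le_of_antitoneOn_Icc hνm hab hν hm (hκ_anti x) fun w => measure_ne_top _ _

/-- The transition kernel of `c • U` when `U` moves according to `κ`. -/
noncomputable def scaledKernel (κ : ℝ → Measure ℝ) (c : ℝ) (w : ℝ) : Measure ℝ :=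
  (κ (w / c)).map (c * ·)

theorem measurable_scaledKernel {κ : ℝ → Measure ℝ} (hκ : Measurable κ) (c : ℝ) :
    Measurable (scaledKernel κ c) :=
  (Measure.measurable_map _ (measurable_const_mul c)).comp (hκ.comp (measurable_div_const c))

theorem scaledKernel_apply_Iic (κ : ℝ → Measure ℝ) {c : ℝ} (hc : 0 < c) (w x : ℝ) :
    scaledKernel κ c w (Iic x) = κ (w / c) (Iic (x / c)) := by
  rw [scaledKernel, Measure.map_apply (measurable_const_mul c) measurableSet_Iic,
    preimage_const_mul_Iic₀ x hc]

theorem map_const_mul_compl_Icc_eq_zero {μ : Measure ℝ} {c a b : ℝ} (hc : 0 < c)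
    (hμ : μ (Icc a b)ᶜ = 0) : μ.map (c * ·) (Icc (c * a) (c * b))ᶜ = 0 := by
  rwa [Measure.map_apply (measurable_const_mul c) measurableSet_Icc.compl, preimage_compl,
    preimage_const_mul_Icc₀ _ _ hc, mul_div_cancel_left₀ _ hc.ne', mul_div_cancel_left₀ _ hc.ne']

theorem scaledKernel_compl_Icc_eq_zero {κ : ℝ → Measure ℝ} {c A : ℝ} (hc : 0 < c)
    (hκ : ∀ t ∈ Icc 0 A, κ t (Icc 0 A)ᶜ = 0) :
    ∀ w ∈ Icc 0 (c * A), scaledKernel κ c w (Icc 0 (c * A))ᶜ = 0 := by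
  intro w hw
  simpa [scaledKernel] using map_const_mul_compl_Icc_eq_zero hc
    (hκ (w / c) ⟨div_nonneg hw.1 hc.le, (div_le_iff₀' hc).2 hw.2⟩)

theorem semiconj_map_bind_scaledKernel {κ : ℝ → Measure ℝ} (hκ : Measurable κ) {c : ℝ}
    (hc : c ≠ 0) :
    Function.Semiconj (Measure.map (c * ·)) (fun m => m.bind κ)
      (fun m => m.bind (scaledKernel κ c)) := by
  intro m
  ext s hs
  have hmul : Measurable (c * · : ℝ → ℝ) := measurable_const_mul c
  rw [Measure.map_apply hmul hs, Measure.bind_apply (hmul hs) hκ.aemeasurable,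
    Measure.bind_apply hs (measurable_scaledKernel hκ c).aemeasurable,
    lintegral_map (f := fun w => scaledKernel κ c w s)
      ((Measure.measurable_coe hs).comp (measurable_scaledKernel hκ c)) hmul]
  simp only [scaledKernel, Measure.map_apply hmul hs, mul_div_cancel_left₀ _ hc]

theorem antitoneOn_measure_Iic_of_ratio_antitone (ρ : ℝ → ℝ → ℝ) {B : ℝ}
    (hC4 : ∀ x : ℝ, x ≤ B → ∀ s s' : ℝ, 0 ≤ s → s ≤ s' →
      0 < ρ s B → 0 < ρ s' B → ρ s' x / ρ s' B ≤ ρ s x / ρ s B)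
    (hpos : ∀ t ∈ Icc 0 B, 0 < ρ t B) {κ : ℝ → Measure ℝ}
    (hprob : ∀ t, IsProbabilityMeasure (κ t)) (hsupp : ∀ t ∈ Icc 0 B, κ t (Icc 0 B)ᶜ = 0)
    (hcdf : ∀ t ∈ Icc 0 B, ∀ x ∈ Icc 0 B, (κ t (Iic x)).toReal = ρ t x / ρ t B) (x : ℝ) :
    AntitoneOn (fun t => κ t (Iic x)) (Icc 0 B) := by
  intro s hs s' hs' hss'
  refine measure_Iic_le_of_forall_mem_Icc (hsupp s' hs') (hsupp s hs) (fun z hz => ?_) x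
  rw [← ENNReal.toReal_le_toReal (measure_ne_top _ _) (measure_ne_top _ _),
    hcdf s' hs' z hz, hcdf s hs z hz]
  exact hC4 z hz.2 s s' hs.1 hss' (hpos s hs) (hpos s' hs')

theorem ratio_div_le_ratio_of_C5 (ρ : ℝ → ℝ → ℝ)
    (hC5 : ∀ s : ℝ, 0 ≤ s → ∀ B : ℝ, 0 < B → ∀ x : ℝ, x ≤ B →
      ∀ t t' : ℝ, 0 < t → t ≤ t' →
      0 < ρ (t * s) (t * B) → 0 < ρ (t' * s) (t' * B) →
      ρ (t * s) (t * x) / ρ (t * s) (t * B) ≤ ρ (t' * s) (t' * x) / ρ (t' * s) (t' * B))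
    {y A w x : ℝ} (hy : 1 ≤ y) (hA : 0 < A) (hw : 0 ≤ w) (hx : x ≤ y * A)
    (hposW : 0 < ρ (w / y) A) (hposV : 0 < ρ w (y * A)) :
    ρ (w / y) (x / y) / ρ (w / y) A ≤ ρ w x / ρ w (y * A) := by
  have hy0 : y ≠ 0 := (one_pos.trans_le hy).ne'
  have h := hC5 (w / y) (div_nonneg hw (zero_le_one.trans hy)) A hA (x / y)
    ((div_le_iff₀' (one_pos.trans_le hy)).2 hx) 1 y one_pos hy
  simp only [one_mul, mul_div_cancel₀ _ hy0] at h
  exact h hposW hposV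

theorem scaledKernel_Iic_le (ρ : ℝ → ℝ → ℝ) {y A : ℝ} (hy : 0 < y)
    (hratio : ∀ w ∈ Icc 0 (y * A), ∀ x ∈ Icc 0 (y * A),
      ρ (w / y) (x / y) / ρ (w / y) A ≤ ρ w x / ρ w (y * A))
    {κV κU : ℝ → Measure ℝ}
    (hκVprob : ∀ t, IsProbabilityMeasure (κV t))
    (hκVsupp : ∀ t ∈ Icc 0 (y * A), κV t (Icc 0 (y * A))ᶜ = 0)
    (hκVcdf : ∀ t ∈ Icc 0 (y * A), ∀ x ∈ Icc 0 (y * A),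
      (κV t (Iic x)).toReal = ρ t x / ρ t (y * A))
    (hκUprob : ∀ t, IsProbabilityMeasure (κU t))
    (hκUsupp : ∀ t ∈ Icc 0 A, κU t (Icc 0 A)ᶜ = 0)
    (hκUcdf : ∀ t ∈ Icc 0 A, ∀ x ∈ Icc 0 A, (κU t (Iic x)).toReal = ρ t x / ρ t A) :
    ∀ w ∈ Icc 0 (y * A), ∀ x, scaledKernel κU y w (Iic x) ≤ κV w (Iic x) := by
  have hdiv : ∀ z ∈ Icc 0 (y * A), z / y ∈ Icc 0 A := fun z hz =>
    ⟨div_nonneg hz.1 hy.le, (div_le_iff₀' hy).2 hz.2⟩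
  intro w hw
  have : IsProbabilityMeasure (scaledKernel κU y w) :=
    Measure.isProbabilityMeasure_map (measurable_const_mul y).aemeasurable
  refine measure_Iic_le_of_forall_mem_Icc (scaledKernel_compl_Icc_eq_zero hy hκUsupp w hw)
    (hκVsupp w hw) fun x hx => ?_
  rw [scaledKernel_apply_Iic κU hy, ← ENNReal.toReal_le_toReal (measure_ne_top _ _)
    (measure_ne_top _ _), hκUcdf _ (hdiv w hw) _ (hdiv x hx), hκVcdf w hw x hx]
  exact hratio w hw x hx

theorem conditioned_chains_stochastic_domination_general
    (ρ : ℝ → ℝ → ℝ)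
    -- (C4)
    (hC4 : ∀ B : ℝ, 0 < B → ∀ x : ℝ, x ≤ B → ∀ s s' : ℝ, 0 ≤ s → s ≤ s' →
      0 < ρ s B → 0 < ρ s' B → ρ s' x / ρ s' B ≤ ρ s x / ρ s B)
    -- (C5)
    (hC5 : ∀ s : ℝ, 0 ≤ s → ∀ B : ℝ, 0 < B → ∀ x : ℝ, x ≤ B →
      ∀ t t' : ℝ, 0 < t → t ≤ t' →
      0 < ρ (t * s) (t * B) → 0 < ρ (t' * s) (t' * B) →
      ρ (t * s) (t * x) / ρ (t * s) (t * B) ≤ ρ (t' * s) (t' * x) / ρ (t' * s) (t' * B))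
    (y A : ℝ) (hy : 1 ≤ y) (hA : 0 < A)
    (hposV : ∀ t ∈ Set.Icc (0 : ℝ) (y * A), 0 < ρ t (y * A))
    (hposW : ∀ t ∈ Set.Icc (0 : ℝ) (y * A), 0 < ρ (t / y) A)
    -- the conditioned kernel of the `V` chain (level `yA`)
    (κV : ℝ → Measure ℝ)
    (hκVmeas : Measurable κV)
    (hκVprob : ∀ t, IsProbabilityMeasure (κV t))
    (hκVsupp : ∀ t ∈ Set.Icc (0 : ℝ) (y * A), κV t (Set.Icc (0 : ℝ) (y * A))ᶜ = 0)
    (hκVcdf : ∀ t ∈ Set.Icc (0 : ℝ) (y * A), ∀ x ∈ Set.Icc (0 : ℝ) (y * A),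
      (κV t (Set.Iic x)).toReal = ρ t x / ρ t (y * A))
    -- the conditioned kernel of the `U` chain (level `A`)
    (κU : ℝ → Measure ℝ)
    (hκUmeas : Measurable κU)
    (hκUprob : ∀ t, IsProbabilityMeasure (κU t))
    (hκUsupp : ∀ t ∈ Set.Icc (0 : ℝ) A, κU t (Set.Icc (0 : ℝ) A)ᶜ = 0)
    (hκUcdf : ∀ t ∈ Set.Icc (0 : ℝ) A, ∀ x ∈ Set.Icc (0 : ℝ) A,
      (κU t (Set.Iic x)).toReal = ρ t x / ρ t A)
    -- initial distributions: `V_0` and `W_0 = y·U_0` have the same distribution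
    (μV μU : Measure ℝ)
    (hμUsupp : μU (Set.Icc (0 : ℝ) A)ᶜ = 0)
    (hinit : μV = μU.map (fun u : ℝ => y * u)) :
    ∀ n : ℕ, ∀ x : ℝ,
      (((fun m : Measure ℝ => m.bind κU)^[n] μU).map (fun u : ℝ => y * u)) (Set.Iic x)
        ≤ ((fun m : Measure ℝ => m.bind κV)^[n] μV) (Set.Iic x) := by
  have hy0 : 0 < y := one_pos.trans_le hy
  have hμVsupp : μV (Icc 0 (y * A))ᶜ = 0 := by
    simpa [hinit] using map_const_mul_compl_Icc_eq_zero hy0 hμUsupp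
  have hκWsupp := scaledKernel_compl_Icc_eq_zero hy0 hκUsupp
  have hκW_le := scaledKernel_Iic_le ρ hy0
    (fun w hw x hx => ratio_div_le_ratio_of_C5 ρ hC5 hy hA hw.1 hx.2 (hposW w hw) (hposV w hw))
    hκVprob hκVsupp hκVcdf hκUprob hκUsupp hκUcdf
  have hκV_anti := antitoneOn_measure_Iic_of_ratio_antitone ρ (hC4 _ (mul_pos hy0 hA)) hposV
    hκVprob hκVsupp hκVcdf
  intro n
  rw [(semiconj_map_bind_scaledKernel hκUmeas hy0.ne').iterate_right n μU, ← hinit]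
  induction n with
  | zero => simp only [Function.iterate_zero, id_eq, le_refl, implies_true]
  | succ n ih =>
    simp only [Function.iterate_succ_apply']
    exact bind_Iic_le_bind_Iic_of_antitoneOn (measurable_scaledKernel hκUmeas y) hκVmeas
      (fun w => have := hκVprob w; inferInstance) (mul_pos hy0 hA).le
      (iterate_bind_compl_eq_zero (measurable_scaledKernel hκUmeas y) measurableSet_Icc
        hμVsupp hκWsupp n)
      (iterate_bind_compl_eq_zero hκVmeas measurableSet_Icc hμVsupp hκVsupp n) ih hκW_le hκV_anti

/-- **Stochastic domination of conditioned chains at every epoch.**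
Let `y ≥ 1`, `A > 0`, and let `ρ` satisfy (C4) and (C5), with `ρ(t,yA) > 0` and
`ρ(t/y, A) > 0` for all `t ∈ [0,yA]`.  Let `(V_n)` be the Markov chain on `[0,yA]` whose
transition kernel `κV` from state `t` has CDF `x ↦ ρ(t,x)/ρ(t,yA)`, let `(U_n)` be the
Markov chain on `[0,A]` whose transition kernel `κU` from state `t` has CDF
`x ↦ ρ(t,x)/ρ(t,A)`, and set `W_n = y·U_n`.  The law of `V_n` (resp. `U_n`) is the
`n`-fold iterate of `m ↦ m.bind κV` (resp. `m ↦ m.bind κU`) applied to the initial law.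
If `V_0` and `W_0 = y·U_0` have the same distribution, then for every `n ≥ 0` and every
`x`, `P(V_n ≤ x) ≥ P(W_n ≤ x)`, i.e. `V_n` is stochastically smaller than `W_n`. -/
theorem conditioned_chains_stochastic_domination
    (ρ : ℝ → ℝ → ℝ)
    (hρ01 : ∀ t x : ℝ, 0 ≤ ρ t x ∧ ρ t x ≤ 1)
    (hρmono : ∀ t : ℝ, Monotone (ρ t))
    -- (C4)
    (hC4 : ∀ B : ℝ, 0 < B → ∀ x : ℝ, x ≤ B → ∀ s s' : ℝ, 0 ≤ s → s ≤ s' →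
      0 < ρ s B → 0 < ρ s' B → ρ s' x / ρ s' B ≤ ρ s x / ρ s B)
    -- (C5)
    (hC5 : ∀ s : ℝ, 0 ≤ s → ∀ B : ℝ, 0 < B → ∀ x : ℝ, x ≤ B →
      ∀ t t' : ℝ, 0 < t → t ≤ t' →
      0 < ρ (t * s) (t * B) → 0 < ρ (t' * s) (t' * B) →
      ρ (t * s) (t * x) / ρ (t * s) (t * B) ≤ ρ (t' * s) (t' * x) / ρ (t' * s) (t' * B))
    (y A : ℝ) (hy : 1 ≤ y) (hA : 0 < A)
    (hposV : ∀ t ∈ Set.Icc (0 : ℝ) (y * A), 0 < ρ t (y * A))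
    (hposW : ∀ t ∈ Set.Icc (0 : ℝ) (y * A), 0 < ρ (t / y) A)
    -- the conditioned kernel of the `V` chain (level `yA`)
    (κV : ℝ → Measure ℝ)
    (hκVmeas : Measurable κV)
    (hκVprob : ∀ t, IsProbabilityMeasure (κV t))
    (hκVsupp : ∀ t ∈ Set.Icc (0 : ℝ) (y * A), κV t (Set.Icc (0 : ℝ) (y * A))ᶜ = 0)
    (hκVcdf : ∀ t ∈ Set.Icc (0 : ℝ) (y * A), ∀ x ∈ Set.Icc (0 : ℝ) (y * A),
      (κV t (Set.Iic x)).toReal = ρ t x / ρ t (y * A))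
    -- the conditioned kernel of the `U` chain (level `A`)
    (κU : ℝ → Measure ℝ)
    (hκUmeas : Measurable κU)
    (hκUprob : ∀ t, IsProbabilityMeasure (κU t))
    (hκUsupp : ∀ t ∈ Set.Icc (0 : ℝ) A, κU t (Set.Icc (0 : ℝ) A)ᶜ = 0)
    (hκUcdf : ∀ t ∈ Set.Icc (0 : ℝ) A, ∀ x ∈ Set.Icc (0 : ℝ) A,
      (κU t (Set.Iic x)).toReal = ρ t x / ρ t A)
    -- initial distributions: `V_0` and `W_0 = y·U_0` have the same distribution
    (μV μU : Measure ℝ)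
    (hμVprob : IsProbabilityMeasure μV) (hμUprob : IsProbabilityMeasure μU)
    (hμUsupp : μU (Set.Icc (0 : ℝ) A)ᶜ = 0)
    (hinit : μV = μU.map (fun u : ℝ => y * u)) :
    ∀ n : ℕ, ∀ x : ℝ,
      (((fun m : Measure ℝ => m.bind κU)^[n] μU).map (fun u : ℝ => y * u)) (Set.Iic x)
        ≤ ((fun m : Measure ℝ => m.bind κV)^[n] μV) (Set.Iic x) :=
  conditioned_chains_stochastic_domination_general ρ hC4 hC5 y A hy hA hposV hposW κV hκVmeas
    hκVprob hκVsupp hκVcdf κU hκUmeas hκUprob hκUsupp hκUcdf μV μU hμUsupp hinit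
end

section
/- (Key integral inequality.) Let A > 0 and y ≥ 1. Let Q_A and Q_{yA} be probability measures on [0,A] and [0,yA] respectively with Q_A({0}) = Q_{yA}({0}) = 0, whose CDFs satisfy Q_{yA}(yx) ≥ Q_A(x) for all x ∈ [0,A]. Suppose s ↦ ρ(s, yA) is nonincreasing on [0, yA] and s ↦ ρ(s, A) is nonincreasing on [0, A] (condition (C2)), and that ρ(yt, yA) ≥ ρ(t, A) for all t ∈ [0, A] (an instance of condition (C3)), where each ρ(·,B) takes values in [0,1] and is measurable. Then ∫_0^{yA} ρ(s, yA) dQ_{yA}(s) ≥ ∫_0^{A} ρ(t, A) dQ_A(t). -/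
/-!
Both integrals are compared through the layer-cake formula, so it suffices to compare the
superlevel sets: `Q_A {ρ(·,A) > u} ≤ Q_{yA} {ρ(·,yA) > u}` for every `u`. A subset of `[0,A]`
is exhausted by the half-lines `(-∞,t]` with `t` in it, and for each such `t` with
`ρ(t,A) > u` the CDF domination gives `Q_A (-∞,t] ≤ Q_{yA} (-∞,yt]`, while (C3) and the
monotonicity of `ρ(·,yA)` put `[0,yt]` inside `{ρ(·,yA) > u}`.
-/

open MeasureTheory Set Filter

theorem measure_le_of_forall_measure_Iic_le {α : Type*} [ConditionallyCompleteLinearOrder α]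
    [TopologicalSpace α] [OrderTopology α] [FirstCountableTopology α] [MeasurableSpace α]
    {μ : Measure α} {S : Set α} {c : ENNReal} (hS : BddAbove S)
    (h : ∀ t ∈ S, μ (Iic t) ≤ c) : μ S ≤ c := by
  rcases S.eq_empty_or_nonempty with rfl | hne
  · simp
  by_cases hsup : sSup S ∈ S
  · exact (measure_mono fun t ht => le_csSup hS ht).trans (h _ hsup)
  obtain ⟨u, hu_mono, hu_lim, hu_mem⟩ := exists_seq_tendsto_sSup hne hS
  have hcover : S ⊆ ⋃ n, Iic (u n) := by
    intro t ht
    have hlt : t < sSup S := (le_csSup hS ht).lt_of_ne fun he => hsup (he ▸ ht)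
    obtain ⟨n, hn⟩ := (hu_lim.eventually (lt_mem_nhds hlt)).exists
    exact mem_iUnion.2 ⟨n, hn.le⟩
  calc μ S ≤ μ (⋃ n, Iic (u n)) := measure_mono hcover
    _ = ⨆ n, μ (Iic (u n)) := (monotone_Iic.comp hu_mono).measure_iUnion
    _ ≤ c := iSup_le fun n => h _ (hu_mem n)

theorem integral_le_integral_of_measure_lt_le {α β : Type*} [MeasurableSpace α]
    [MeasurableSpace β] {μ : Measure α} {ν : Measure β} {f : α → ℝ} {g : β → ℝ}
    (hf_nonneg : 0 ≤ᵐ[μ] f) (hf_meas : AEMeasurable f μ) (hg_nonneg : 0 ≤ᵐ[ν] g)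
    (hg_int : Integrable g ν) (h : ∀ u, μ {x | u < f x} ≤ ν {x | u < g x}) :
    ∫ x, f x ∂μ ≤ ∫ x, g x ∂ν := by
  rw [integral_eq_lintegral_of_nonneg_ae hf_nonneg hf_meas.aestronglyMeasurable,
    integral_eq_lintegral_of_nonneg_ae hg_nonneg hg_int.aestronglyMeasurable]
  refine ENNReal.toReal_mono hg_int.lintegral_lt_top.ne ?_
  rw [lintegral_eq_lintegral_meas_lt μ hf_nonneg hf_meas,
    lintegral_eq_lintegral_meas_lt ν hg_nonneg hg_int.aemeasurable]
  exact lintegral_mono h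

theorem measure_lt_le_of_cdf_le_comp_mul {μ ν : Measure ℝ} {f g : ℝ → ℝ} {A y : ℝ}
    (hy : 0 ≤ y) (hμ : μ (Icc 0 A)ᶜ = 0) (hν : ν (Icc 0 (y * A))ᶜ = 0)
    (hg : AntitoneOn g (Icc 0 (y * A))) (hfg : ∀ t ∈ Icc 0 A, f t ≤ g (y * t))
    (hcdf : ∀ x ∈ Icc 0 A, μ (Iic x) ≤ ν (Iic (y * x))) (u : ℝ) :
    μ {t | u < f t} ≤ ν {s | u < g s} := by
  rw [← measure_inter_conull hμ, ← measure_inter_conull (s := {s | u < g s}) hν]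
  refine measure_le_of_forall_measure_Iic_le ⟨A, fun t ht => ht.2.2⟩ ?_
  rintro t ⟨hut, ht⟩
  have hyt : y * t ∈ Icc 0 (y * A) := ⟨mul_nonneg hy ht.1, mul_le_mul_of_nonneg_left ht.2 hy⟩
  have hsub : Iic (y * t) ∩ Icc 0 (y * A) ⊆ {s | u < g s} ∩ Icc 0 (y * A) :=
    fun s ⟨hs, hs'⟩ => ⟨hut.trans_le ((hfg t ht).trans (hg hs' hyt hs)), hs'⟩
  calc μ (Iic t) ≤ ν (Iic (y * t)) := hcdf t ht
    _ = ν (Iic (y * t) ∩ Icc 0 (y * A)) := (measure_inter_conull hν).symm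
    _ ≤ _ := measure_mono hsub

theorem key_integral_inequality_general
    (ρ : ℝ → ℝ → ℝ)
    (A y : ℝ) (hy : 1 ≤ y)
    (hρ01 : ∀ s B : ℝ, 0 ≤ ρ s B ∧ ρ s B ≤ 1)
    (hmeasA : Measurable fun s : ℝ => ρ s A)
    (hmeasyA : Measurable fun s : ℝ => ρ s (y * A))
    -- (C2) at levels `yA` and `A`
    (hmono_yA : ∀ s ∈ Set.Icc (0 : ℝ) (y * A), ∀ s' ∈ Set.Icc (0 : ℝ) (y * A),
      s ≤ s' → ρ s' (y * A) ≤ ρ s (y * A))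
    -- instance of (C3)
    (hC3 : ∀ t ∈ Set.Icc (0 : ℝ) A, ρ t A ≤ ρ (y * t) (y * A))
    (QA QyA : Measure ℝ)
    (hQyAprob : IsProbabilityMeasure QyA)
    (hQAsupp : QA (Set.Icc (0 : ℝ) A)ᶜ = 0)
    (hQyAsupp : QyA (Set.Icc (0 : ℝ) (y * A))ᶜ = 0)
    -- CDF domination: `Q_{yA}(yx) ≥ Q_A(x)` for `x ∈ [0,A]`
    (hcdf : ∀ x ∈ Set.Icc (0 : ℝ) A, QA (Set.Iic x) ≤ QyA (Set.Iic (y * x))) :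
    ∫ t, ρ t A ∂QA ≤ ∫ s, ρ s (y * A) ∂QyA := by
  have hint : Integrable (fun s => ρ s (y * A)) QyA :=
    .of_bound hmeasyA.aestronglyMeasurable 1 <| ae_of_all _ fun s => by
      rw [Real.norm_of_nonneg (hρ01 s _).1]
      exact (hρ01 s _).2
  have hsuperlevel (u : ℝ) : QA {t | u < ρ t A} ≤ QyA {s | u < ρ s (y * A)} :=
    measure_lt_le_of_cdf_le_comp_mul (by linarith) hQAsupp hQyAsupp
      (fun s hs s' hs' => hmono_yA s hs s' hs') hC3 hcdf u
  exact integral_le_integral_of_measure_lt_le (ae_of_all _ fun t => (hρ01 t A).1)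
    hmeasA.aemeasurable (ae_of_all _ fun s => (hρ01 s _).1) hint hsuperlevel

/-- **Key integral inequality.**
Let `A > 0` and `y ≥ 1`.  Let `Q_A` and `Q_{yA}` be probability measures supported on
`[0,A]` and `[0,yA]` respectively, with no atom at `0`, whose CDFs satisfy
`Q_{yA}(yx) ≥ Q_A(x)` for all `x ∈ [0,A]`.  Suppose `s ↦ ρ(s,yA)` is nonincreasing on
`[0,yA]` and `s ↦ ρ(s,A)` is nonincreasing on `[0,A]` (condition (C2)), and that
`ρ(yt, yA) ≥ ρ(t,A)` for all `t ∈ [0,A]` (an instance of condition (C3)), where each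
`ρ(·,B)` takes values in `[0,1]` and is measurable.  Then
`∫₀^{yA} ρ(s,yA) dQ_{yA}(s) ≥ ∫₀^A ρ(t,A) dQ_A(t)`. -/
theorem key_integral_inequality
    (ρ : ℝ → ℝ → ℝ)
    (A y : ℝ) (hA : 0 < A) (hy : 1 ≤ y)
    (hρ01 : ∀ s B : ℝ, 0 ≤ ρ s B ∧ ρ s B ≤ 1)
    (hmeasA : Measurable fun s : ℝ => ρ s A)
    (hmeasyA : Measurable fun s : ℝ => ρ s (y * A))
    -- (C2) at levels `yA` and `A`
    (hmono_yA : ∀ s ∈ Set.Icc (0 : ℝ) (y * A), ∀ s' ∈ Set.Icc (0 : ℝ) (y * A),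
      s ≤ s' → ρ s' (y * A) ≤ ρ s (y * A))
    (hmono_A : ∀ s ∈ Set.Icc (0 : ℝ) A, ∀ s' ∈ Set.Icc (0 : ℝ) A,
      s ≤ s' → ρ s' A ≤ ρ s A)
    -- instance of (C3)
    (hC3 : ∀ t ∈ Set.Icc (0 : ℝ) A, ρ t A ≤ ρ (y * t) (y * A))
    (QA QyA : Measure ℝ)
    (hQAprob : IsProbabilityMeasure QA) (hQyAprob : IsProbabilityMeasure QyA)
    (hQAsupp : QA (Set.Icc (0 : ℝ) A)ᶜ = 0)
    (hQyAsupp : QyA (Set.Icc (0 : ℝ) (y * A))ᶜ = 0)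
    (hQA0 : QA {(0 : ℝ)} = 0) (hQyA0 : QyA {(0 : ℝ)} = 0)
    -- CDF domination: `Q_{yA}(yx) ≥ Q_A(x)` for `x ∈ [0,A]`
    (hcdf : ∀ x ∈ Set.Icc (0 : ℝ) A, QA (Set.Iic x) ≤ QyA (Set.Iic (y * x))) :
    ∫ t, ρ t A ∂QA ≤ ∫ s, ρ s (y * A) ∂QyA :=
  key_integral_inequality_general ρ A y hy hρ01 hmeasA hmeasyA hmono_yA hC3 QA QyA hQyAprob hQAsupp
    hQyAsupp hcdf
end

section
/- Let F : ℝ → [0,1] be nondecreasing with F(u) > 0 for u > 0, satisfying (D2): for all 0 < x ≤ B, t ↦ F(tx)/F(tB) is nondecreasing in t > 0. Let φ : [0,∞) → (0,∞) be nondecreasing with t ↦ t/φ(t) nondecreasing on (0,∞). Define ρ(s,x) = F(x/φ(s)). Then ρ satisfies: (C4) for each fixed B > 0 and 0 < x ≤ B, s ↦ ρ(s,x)/ρ(s,B) is nonincreasing on [0,∞); and (C5) for each fixed s > 0, B > 0 and 0 < x ≤ B, t ↦ ρ(ts, tx)/ρ(ts, tB) is nondecreasing on (0,∞). -/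
/-!
Both conditions reduce to (D2): `ρ(s, ·) = F(c · ·)` with the scale `c = 1/φ(s)`, which
decreases in `s` because `φ` is nondecreasing, while `ρ(ts, t ·) = F(c_t · ·)` with
`c_t = t/φ(ts) = (ts/φ(ts))/s`, which increases in `t` because `u ↦ u/φ(u)` does.
-/

/-- Condition (D2) on `F`. -/
def ScaleRatioMonotone (F : ℝ → ℝ) : Prop :=
  ∀ B : ℝ, 0 < B → ∀ x : ℝ, 0 < x → x ≤ B → ∀ t t' : ℝ, 0 < t → t ≤ t' →
    F (t * x) / F (t * B) ≤ F (t' * x) / F (t' * B)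

lemma div_comp_mul_le_of_div_self_monotone {φ : ℝ → ℝ}
    (hratio : ∀ s t : ℝ, 0 < s → s ≤ t → s / φ s ≤ t / φ t)
    {s t t' : ℝ} (hs : 0 < s) (ht : 0 < t) (htt' : t ≤ t') :
    t / φ (t * s) ≤ t' / φ (t' * s) := by
  have key : ∀ u, u / φ (u * s) = u * s / φ (u * s) / s := fun u => by
    rw [mul_div_right_comm, mul_div_cancel_right₀ _ hs.ne']
  rw [key t, key t']
  exact div_le_div_of_nonneg_right (hratio _ _ (by positivity) (by gcongr)) hs.le

lemma ScaleRatioMonotone.div_antitone_in_state {F φ : ℝ → ℝ} (hD2 : ScaleRatioMonotone F)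
    (hφpos : ∀ t : ℝ, 0 ≤ t → 0 < φ t) (hφmono : ∀ s t : ℝ, 0 ≤ s → s ≤ t → φ s ≤ φ t)
    {B x s s' : ℝ} (hB : 0 < B) (hx : 0 < x) (hxB : x ≤ B) (hs : 0 ≤ s) (hss' : s ≤ s') :
    F (x / φ s') / F (B / φ s') ≤ F (x / φ s) / F (B / φ s) := by
  simp only [div_eq_inv_mul _ (φ _)]
  exact hD2 B hB x hx hxB _ _ (inv_pos.2 (hφpos s' (hs.trans hss')))
    (inv_anti₀ (hφpos s hs) (hφmono s s' hs hss'))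

lemma ScaleRatioMonotone.div_monotone_under_scaling {F φ : ℝ → ℝ}
    (hD2 : ScaleRatioMonotone F) (hφpos : ∀ t : ℝ, 0 ≤ t → 0 < φ t)
    (hratio : ∀ s t : ℝ, 0 < s → s ≤ t → s / φ s ≤ t / φ t)
    {s B x t t' : ℝ} (hs : 0 < s) (hB : 0 < B) (hx : 0 < x) (hxB : x ≤ B) (ht : 0 < t)
    (htt' : t ≤ t') :
    F (t * x / φ (t * s)) / F (t * B / φ (t * s)) ≤
      F (t' * x / φ (t' * s)) / F (t' * B / φ (t' * s)) := by
  simp only [mul_div_right_comm _ _ (φ _)]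
  exact hD2 B hB x hx hxB _ _ (div_pos ht (hφpos _ (by positivity)))
    (div_comp_mul_le_of_div_self_monotone hratio hs ht htt')

theorem multiplicative_recursion_satisfies_C4_C5_general
    (F : ℝ → ℝ)
    -- (D2)
    (hD2 : ∀ B : ℝ, 0 < B → ∀ x : ℝ, 0 < x → x ≤ B → ∀ t t' : ℝ, 0 < t → t ≤ t' →
      F (t * x) / F (t * B) ≤ F (t' * x) / F (t' * B))
    (φ : ℝ → ℝ)
    (hφpos : ∀ t : ℝ, 0 ≤ t → 0 < φ t)
    (hφmono : ∀ s t : ℝ, 0 ≤ s → s ≤ t → φ s ≤ φ t)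
    (hratio : ∀ s t : ℝ, 0 < s → s ≤ t → s / φ s ≤ t / φ t)
    (ρ : ℝ → ℝ → ℝ)
    (hρ : ∀ s x : ℝ, ρ s x = F (x / φ s)) :
    -- (C4)
    (∀ B : ℝ, 0 < B → ∀ x : ℝ, 0 < x → x ≤ B → ∀ s s' : ℝ, 0 ≤ s → s ≤ s' →
      ρ s' x / ρ s' B ≤ ρ s x / ρ s B) ∧
    -- (C5)
    (∀ s : ℝ, 0 < s → ∀ B : ℝ, 0 < B → ∀ x : ℝ, 0 < x → x ≤ B →
      ∀ t t' : ℝ, 0 < t → t ≤ t' →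
      ρ (t * s) (t * x) / ρ (t * s) (t * B) ≤ ρ (t' * s) (t' * x) / ρ (t' * s) (t' * B)) := by
  simp only [hρ]
  exact ⟨fun B hB x hx hxB s s' hs hss' =>
      ScaleRatioMonotone.div_antitone_in_state hD2 hφpos hφmono hB hx hxB hs hss',
    fun s hs B hB x hx hxB t t' ht htt' =>
      ScaleRatioMonotone.div_monotone_under_scaling hD2 hφpos hratio hs hB hx hxB ht htt'⟩

/-- For Markov processes of the form `M_{n+1} = φ(M_n) · Λ_{n+1}` with i.i.d. positive
multipliers with CDF `F`, the transition function is `ρ(s,x) = F(x/φ(s))`.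
Assume `F : ℝ → [0,1]` is nondecreasing, `F(u) > 0` for `u > 0`, and `F` satisfies
(D2): for all `0 < x ≤ B`, `t ↦ F(tx)/F(tB)` is nondecreasing in `t > 0`.
Assume `φ : [0,∞) → (0,∞)` is nondecreasing with `t ↦ t/φ(t)` nondecreasing on `(0,∞)`.
Then `ρ` satisfies:
(C4) for each fixed `B > 0` and `0 < x ≤ B`, `s ↦ ρ(s,x)/ρ(s,B)` is nonincreasing
on `[0,∞)`; and
(C5) for each fixed `s > 0`, `B > 0` and `0 < x ≤ B`, `t ↦ ρ(ts,tx)/ρ(ts,tB)` is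
nondecreasing on `(0,∞)`. -/
theorem multiplicative_recursion_satisfies_C4_C5
    (F : ℝ → ℝ)
    (hF01 : ∀ u : ℝ, 0 ≤ F u ∧ F u ≤ 1)
    (hFmono : Monotone F)
    (hFpos : ∀ u : ℝ, 0 < u → 0 < F u)
    -- (D2)
    (hD2 : ∀ B : ℝ, 0 < B → ∀ x : ℝ, 0 < x → x ≤ B → ∀ t t' : ℝ, 0 < t → t ≤ t' →
      F (t * x) / F (t * B) ≤ F (t' * x) / F (t' * B))
    (φ : ℝ → ℝ)
    (hφpos : ∀ t : ℝ, 0 ≤ t → 0 < φ t)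
    (hφmono : ∀ s t : ℝ, 0 ≤ s → s ≤ t → φ s ≤ φ t)
    (hratio : ∀ s t : ℝ, 0 < s → s ≤ t → s / φ s ≤ t / φ t)
    (ρ : ℝ → ℝ → ℝ)
    (hρ : ∀ s x : ℝ, ρ s x = F (x / φ s)) :
    -- (C4)
    (∀ B : ℝ, 0 < B → ∀ x : ℝ, 0 < x → x ≤ B → ∀ s s' : ℝ, 0 ≤ s → s ≤ s' →
      ρ s' x / ρ s' B ≤ ρ s x / ρ s B) ∧
    -- (C5)
    (∀ s : ℝ, 0 < s → ∀ B : ℝ, 0 < B → ∀ x : ℝ, 0 < x → x ≤ B →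
      ∀ t t' : ℝ, 0 < t → t ≤ t' →
      ρ (t * s) (t * x) / ρ (t * s) (t * B) ≤ ρ (t' * s) (t' * x) / ρ (t' * s) (t' * B)) :=
  multiplicative_recursion_satisfies_C4_C5_general F hD2 φ hφpos hφmono hratio ρ hρ
end
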